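/- arXiv:math/9706213 — 7 statements merged into one kernel-verified Lean document; each statement's English description precedes it below -/
import Mathlib

section
/- Let φ : B(H) → B(H) be a Jordan homomorphism (a complex-linear map satisfying φ(A²) = φ(A)² for all A ∈ B(H)). Then φ is either injective or identically zero. -/
/-!
If `φ` kills some `T ≠ 0`, it kills the rank-one operator `R = |u⟩⟨Tu|` with `Tu ≠ 0`,
because `R T R = ‖Tu‖² R`, and the Jordan triple products `B R C + C R B` spread this to
every rank-one operator, hence to every finite-rank coordinate projection.

Index an orthonormal basis by `ℕ × ℤ`. The graphs of `n ↦ ⌊r 2ⁿ⌋`, `r ∈ ℝ`, are uncountably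
many infinite, co-infinite, pairwise almost disjoint sets. If `φ` kills the projection `P_r`
onto one of them, a permutation unitary `U` with `U P_r U = 1 - P_r` gives `φ 1 = 0`, and
then `2 φ A = φ 1 φ A + φ A φ 1 = 0`. Otherwise the `φ P_r` are nonzero idempotents with
`φ P_r φ P_s + φ P_s φ P_r = φ (P_r P_s + P_s P_r) = 0`, hence pairwise orthogonal, and a
separable space carries only countably many of those.
-/

open InnerProductSpace Metric TopologicalSpace

def PreservesSquares {A B : Type*} [Mul A] [Mul B] (f : A → B) : Prop :=
  ∀ a, f (a * a) = f a * f a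

theorem IsIdempotentElem.mul_eq_zero_of_mul_add_mul_eq_zero {B : Type*} [NonUnitalRing B]
    [IsAddTorsionFree B] {e f : B} (he : IsIdempotentElem e) (h : e * f + f * e = 0) :
    e * f = 0 := by
  have hl : e * f + e * f * e = 0 := by
    calc e * f + e * f * e = e * (e * f + f * e) := by rw [mul_add, ← mul_assoc, he.eq, mul_assoc]
      _ = 0 := by rw [h, mul_zero]
  have hr : e * f * e + f * e = 0 := by
    calc e * f * e + f * e = (e * f + f * e) * e := by rw [add_mul, mul_assoc f, he.eq]
      _ = 0 := by rw [h, zero_mul]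
  have hcomm : f * e = e * f :=
    (eq_neg_of_add_eq_zero_right hr).trans (eq_neg_of_add_eq_zero_left hl).symm
  rw [hcomm, ← two_nsmul] at h
  exact two_nsmul_eq_zero.1 h

namespace PreservesSquares

section NonUnital

variable {A B Φ : Type*} [NonUnitalRing A] [NonUnitalRing B] [FunLike Φ A B]
  [AddMonoidHomClass Φ A B] {φ : Φ}

theorem map_mul_add_mul_swap (hφ : PreservesSquares φ) (a b : A) :
    φ (a * b + b * a) = φ a * φ b + φ b * φ a := by
  have e : a * b + b * a = (a + b) * (a + b) - a * a - b * b := by noncomm_ring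
  rw [e, map_sub, map_sub, hφ, hφ, hφ, map_add]
  noncomm_ring

variable [IsAddTorsionFree B]

theorem map_sandwich (hφ : PreservesSquares φ) (a b : A) :
    φ (b * a * b) = φ b * φ a * φ b := by
  have e : 2 • (b * a * b) =
      b * (a * b + b * a) + (a * b + b * a) * b - (b * b * a + a * (b * b)) := by
    noncomm_ring
  refine (nsmul_right_inj two_ne_zero).1 ?_
  rw [← map_nsmul, e, map_sub, hφ.map_mul_add_mul_swap, hφ.map_mul_add_mul_swap,
    hφ.map_mul_add_mul_swap, hφ]
  noncomm_ring

theorem map_sandwich_add_sandwich (hφ : PreservesSquares φ) (a b c : A) :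
    φ (b * a * c + c * a * b) = φ b * φ a * φ c + φ c * φ a * φ b := by
  have e : b * a * c + c * a * b = (b + c) * a * (b + c) - b * a * b - c * a * c := by
    noncomm_ring
  rw [e, map_sub, map_sub, hφ.map_sandwich, hφ.map_sandwich, hφ.map_sandwich, map_add]
  noncomm_ring

end NonUnital

theorem eq_zero_of_map_one {A B Φ : Type*} [Ring A] [NonUnitalRing B] [IsAddTorsionFree B]
    [FunLike Φ A B] [AddMonoidHomClass Φ A B] {φ : Φ} (hφ : PreservesSquares φ) (h : φ 1 = 0)
    (a : A) : φ a = 0 := by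
  have := hφ.map_mul_add_mul_swap 1 a
  rwa [one_mul, mul_one, h, zero_mul, mul_zero, add_zero, map_add, ← two_nsmul,
    two_nsmul_eq_zero] at this

end PreservesSquares

theorem countable_of_pairwise_le_dist {ι X : Type*} [PseudoMetricSpace X] [SeparableSpace X]
    {x : ι → X} {ε : ℝ} (hε : 0 < ε) (h : Pairwise fun i j => ε ≤ dist (x i) (x j)) :
    Countable ι :=
  Pairwise.countable_of_isOpen_disjoint (s := fun i => ball (x i) (ε / 2))
    (fun _ _ hij => ball_disjoint_ball (by linarith [h hij])) (fun _ => isOpen_ball)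
    (fun _ => nonempty_ball.2 (half_pos hε))

theorem Orthonormal.countable {ι 𝕜 E : Type*} [RCLike 𝕜] [NormedAddCommGroup E]
    [InnerProductSpace 𝕜 E] [SeparableSpace E] {v : ι → E} (hv : Orthonormal 𝕜 v) :
    Countable ι := by
  refine countable_of_pairwise_le_dist (x := v) one_pos fun i j hij => ?_
  have hsq : dist (v i) (v j) ^ 2 = 2 := by
    rw [dist_eq_norm, @norm_sub_sq 𝕜, hv.2 hij, hv.1 i, hv.1 j]
    norm_num
  nlinarith [dist_nonneg (x := v i) (y := v j)]

/-- Vectors `w i` fixed by `e i` satisfy `‖w i‖ ≤ ‖e i‖ * dist (w i) (w j)`, so they are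
uniformly separated on each set where `‖e i‖ / ‖w i‖` is bounded. -/
theorem countable_of_isIdempotentElem_of_mul_eq_zero {ι 𝕜 F : Type*} [NontriviallyNormedField 𝕜]
    [NormedAddCommGroup F] [NormedSpace 𝕜 F] [SeparableSpace F] {e : ι → F →L[𝕜] F}
    (he : ∀ i, IsIdempotentElem (e i)) (hne : ∀ i, e i ≠ 0)
    (horth : Pairwise fun i j => e i * e j = 0) : Countable ι := by
  have hw : ∀ i, ∃ w, w ≠ 0 ∧ e i w = w := fun i => by
    obtain ⟨x, hx⟩ := DFunLike.ne_iff.1 (hne i)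
    exact ⟨e i x, hx, congr($((he i).eq) x)⟩
  choose w hw0 hew using hw
  have hsep : ∀ i j, i ≠ j → ‖w i‖ ≤ ‖e i‖ * dist (w i) (w j) := fun i j hij => by
    have hij : e i (w j) = 0 := by rw [← hew j, ← mul_apply_eq_comp, horth hij, zero_apply]
    calc ‖w i‖ = ‖e i (w i - w j)‖ := by rw [map_sub, hew, hij, sub_zero]
      _ ≤ ‖e i‖ * dist (w i) (w j) := by rw [dist_eq_norm]; exact (e i).le_opNorm _
  let a : ℕ → Set ι := fun n => {i | ‖e i‖ ≤ (n + 1) * ‖w i‖}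
  have ha : ∀ n, (a n).Countable := fun n => by
    rw [← Set.countable_coe_iff]
    refine countable_of_pairwise_le_dist (x := fun i : a n => w i) (ε := (n + 1 : ℝ)⁻¹)
      (by positivity) fun i j hij => ?_
    have hi := norm_pos_iff.2 (hw0 i)
    have := hsep i j (Subtype.coe_injective.ne hij)
    show (n + 1 : ℝ)⁻¹ ≤ dist (w i) (w j)
    rw [inv_le_iff_one_le_mul₀ (by positivity)]
    have hmem : ‖e i‖ ≤ (n + 1) * ‖w i‖ := i.2
    have hd := dist_nonneg (x := w i) (y := w j)
    nlinarith [mul_le_mul_of_nonneg_right hmem hd]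
  have hcover : Set.univ ⊆ ⋃ n, a n := fun i _ => by
    obtain ⟨n, hn⟩ := exists_nat_ge (‖e i‖ / ‖w i‖)
    refine Set.mem_iUnion.2 ⟨n, ?_⟩
    have hi := norm_pos_iff.2 (hw0 i)
    rw [div_le_iff₀ hi] at hn
    show ‖e i‖ ≤ (n + 1) * ‖w i‖
    nlinarith
  exact Set.countable_univ_iff.1 ((Set.countable_iUnion ha).mono hcover)

namespace HilbertBasis

variable {ι ι' 𝕜 E : Type*} [RCLike 𝕜] [NormedAddCommGroup E] [InnerProductSpace 𝕜 E]
  (b : HilbertBasis ι 𝕜 E)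

theorem continuousLinearMap_ext {F : Type*} [NormedAddCommGroup F] [NormedSpace 𝕜 F]
    {f g : E →L[𝕜] F} (h : ∀ i, f (b i) = g (b i)) : f = g :=
  ContinuousLinearMap.ext_on ((Submodule.dense_iff_topologicalClosure_eq_top).2 b.dense_span)
    (by rintro _ ⟨i, rfl⟩; exact h i)

variable [CompleteSpace E]

protected noncomputable def reindex (e : ι' ≃ ι) : HilbertBasis ι' 𝕜 E :=
  .mk (b.orthonormal.comp e e.injective) (by rw [EquivLike.range_comp]; exact b.dense_span.ge)

@[simp]
theorem coe_reindex (e : ι' ≃ ι) : ⇑(b.reindex e) = b ∘ e :=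
  HilbertBasis.coe_mk _ _

theorem nonempty_of_countable (ι : Type*) [Countable ι] [Infinite ι] [SeparableSpace E]
    (hinf : ¬ FiniteDimensional 𝕜 E) : Nonempty (HilbertBasis ι 𝕜 E) := by
  obtain ⟨w, b, hb⟩ := exists_hilbertBasis 𝕜 E
  have : Countable w := b.orthonormal.countable
  have : Infinite w := by
    by_contra hfin
    have : Fintype w := @Fintype.ofFinite w (not_infinite_iff_finite.1 hfin)
    exact hinf b.toOrthonormalBasis.toBasis.finiteDimensional_of_finite
  exact ⟨b.reindex (nonempty_equiv_of_countable.some)⟩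

noncomputable def proj (S : Set ι) : E →L[𝕜] E :=
  (Submodule.span 𝕜 (b '' S)).topologicalClosure.starProjection

theorem proj_apply (S : Set ι) (i : ι) : b.proj S (b i) = S.indicator b i := by
  by_cases hi : i ∈ S
  · rw [Set.indicator_of_mem hi, proj, Submodule.starProjection_eq_self_iff]
    exact Submodule.le_topologicalClosure _ (Submodule.subset_span ⟨i, hi, rfl⟩)
  · rw [Set.indicator_of_notMem hi, proj, Submodule.starProjection_apply_eq_zero_iff,
      Submodule.orthogonal_closure, Submodule.mem_orthogonal]
    intro u hu
    induction hu using Submodule.span_induction with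
    | mem x hx =>
      obtain ⟨j, hj, rfl⟩ := hx
      exact b.orthonormal.2 (ne_of_mem_of_not_mem hj hi)
    | zero => exact inner_zero_left _
    | add x y _ _ hx hy => rw [inner_add_left, hx, hy, add_zero]
    | smul c x _ hx => rw [inner_smul_left, hx, mul_zero]

theorem proj_mul_proj (S T : Set ι) : b.proj S * b.proj T = b.proj (S ∩ T) :=
  b.continuousLinearMap_ext fun i => by
    by_cases hT : i ∈ T <;> by_cases hS : i ∈ S <;> simp [mul_apply_eq_comp, proj_apply, hS, hT]

theorem proj_add_proj_compl (S : Set ι) : b.proj S + b.proj Sᶜ = 1 :=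
  b.continuousLinearMap_ext fun i => by
    rw [add_apply, proj_apply, proj_apply, Set.indicator_self_add_compl_apply,
      one_apply_eq_self]

theorem proj_finset (s : Finset ι) : b.proj s = ∑ i ∈ s, rankOne 𝕜 (b i) (b i) := by
  classical
  refine b.continuousLinearMap_ext fun j => ?_
  simp [proj_apply, orthonormal_iff_ite.1 b.orthonormal, Set.indicator_apply]

noncomputable def permute (τ : Equiv.Perm ι) : E →L[𝕜] E :=
  (b.repr.trans (b.reindex τ).repr.symm).toContinuousLinearEquiv

theorem permute_apply (τ : Equiv.Perm ι) (i : ι) : b.permute τ (b i) = b (τ i) := by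
  classical
  simp [permute, HilbertBasis.repr_self, HilbertBasis.repr_symm_single]

theorem permute_mul_proj_mul_permute {τ : Equiv.Perm ι} (hτ : Function.Involutive τ)
    (S : Set ι) : b.permute τ * b.proj S * b.permute τ = b.proj (τ ⁻¹' S) :=
  b.continuousLinearMap_ext fun i => by
    by_cases hi : τ i ∈ S <;> simp [mul_apply_eq_comp, permute_apply, proj_apply, hi, hτ i]

end HilbertBasis

theorem Set.exists_involutive_perm_preimage_eq_compl {α : Type*} {S : Set α} (e : S ≃ ↥Sᶜ) :
    ∃ τ : Equiv.Perm α, Function.Involutive τ ∧ τ ⁻¹' S = Sᶜ := by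
  classical
  let σ : Equiv.Perm (S ⊕ ↥Sᶜ) := (Equiv.sumCongr e e.symm).trans (Equiv.sumComm _ _)
  have hσ : Function.Involutive σ := by rintro (x | x) <;> simp [σ]
  refine ⟨(Equiv.Set.sumCompl S).permCongr σ, fun x => by simp [hσ _], Set.ext fun x => ?_⟩
  by_cases hx : x ∈ S
  · simp [Equiv.permCongr_apply, Equiv.Set.sumCompl_symm_apply_of_mem hx, σ, hx]
    exact (e ⟨x, hx⟩).2
  · simp [Equiv.permCongr_apply, Equiv.Set.sumCompl_symm_apply_of_notMem hx, σ, hx]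

def dyadicGraph (r : ℝ) : Set (ℕ × ℤ) :=
  Set.range fun n : ℕ => (n, ⌊r * 2 ^ n⌋)

theorem dyadicGraph_infinite (r : ℝ) : (dyadicGraph r).Infinite :=
  Set.infinite_range_of_injective fun _ _ h => (Prod.ext_iff.1 h).1

theorem dyadicGraph_compl_infinite (r : ℝ) : (dyadicGraph r)ᶜ.Infinite :=
  Set.infinite_of_injective_forall_mem (f := fun n : ℕ => (n, ⌊r * 2 ^ n⌋ + 1))
    (fun _ _ h => (Prod.ext_iff.1 h).1) fun n ⟨m, hm⟩ => by
      obtain ⟨rfl, h⟩ := Prod.ext_iff.1 hm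
      simp at h

/-- `⌊r * 2 ^ n⌋ ≠ ⌊s * 2 ^ n⌋` as soon as `1 ≤ 2 ^ n * |r - s|`. -/
theorem dyadicGraph_inter_finite {r s : ℝ} (hrs : r ≠ s) :
    (dyadicGraph r ∩ dyadicGraph s).Finite := by
  obtain ⟨N, hN⟩ := pow_unbounded_of_one_lt |r - s|⁻¹ one_lt_two
  refine ((Set.finite_Iio N).image fun n : ℕ => (n, ⌊r * 2 ^ n⌋)).subset ?_
  rintro _ ⟨⟨n, rfl⟩, ⟨m, hm⟩⟩
  obtain ⟨rfl, h⟩ := Prod.ext_iff.1 hm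
  refine ⟨m, Set.mem_Iio.2 (lt_of_not_ge fun hNm => ?_), rfl⟩
  have h1 : |s * 2 ^ m - r * 2 ^ m| < 1 := Int.abs_sub_lt_one_of_floor_eq_floor h
  have h2 : |r - s|⁻¹ < 2 ^ m := hN.trans_le (pow_le_pow_right₀ one_le_two hNm)
  rw [← sub_mul, abs_mul, abs_of_pos (by positivity : (0 : ℝ) < 2 ^ m), abs_sub_comm] at h1
  rw [inv_lt_iff_one_lt_mul₀ (abs_pos.2 (sub_ne_zero.2 hrs)), mul_comm] at h2
  linarith

instance {𝕜 E : Type*} [RCLike 𝕜] [NormedAddCommGroup E] [NormedSpace 𝕜 E] :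
    IsAddTorsionFree (E →L[𝕜] E) :=
  .of_isTorsionFree 𝕜 _

theorem exists_ne_zero_inner_eq_zero {𝕜 E : Type*} [RCLike 𝕜] [NormedAddCommGroup E]
    [InnerProductSpace 𝕜 E] (hinf : ¬ FiniteDimensional 𝕜 E) (v : E) :
    ∃ w ≠ 0, inner 𝕜 v w = 0 := by
  by_contra! h
  have hbot : (𝕜 ∙ v)ᗮ = ⊥ := (Submodule.eq_bot_iff _).2 fun w hw => by
    by_contra hw0
    exact h w hw0 (Submodule.mem_orthogonal_singleton_iff_inner_right.1 hw)
  rw [Submodule.orthogonal_eq_bot_iff] at hbot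
  exact hinf ⟨hbot ▸ Submodule.fg_span_singleton v⟩

namespace PreservesSquares

section RankOne

variable {𝕜 E B Φ : Type*} [RCLike 𝕜] [NormedAddCommGroup E] [InnerProductSpace 𝕜 E]
  [NonUnitalRing B] [Module 𝕜 B] [IsAddTorsionFree B] [FunLike Φ (E →L[𝕜] E) B]
  [LinearMapClass Φ 𝕜 (E →L[𝕜] E) B] {φ : Φ}

theorem map_rankOne_apply_eq_zero (hφ : PreservesSquares φ) {T : E →L[𝕜] E} (hT : φ T = 0)
    {u : E} (hu : T u ≠ 0) : φ (rankOne 𝕜 u (T u)) = 0 := by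
  have hRTR : rankOne 𝕜 u (T u) * T * rankOne 𝕜 u (T u) =
      inner 𝕜 (T u) (T u) • rankOne 𝕜 u (T u) := by
    ext z
    simp [smul_smul, mul_comm]
  have := hφ.map_sandwich T (rankOne 𝕜 u (T u))
  rw [hRTR, map_smul, hT, mul_zero, zero_mul] at this
  exact (smul_eq_zero.1 this).resolve_left (inner_self_ne_zero.2 hu)

theorem map_rankOne_eq_zero_of_inner_eq_zero (hφ : PreservesSquares φ) {u v : E}
    (hu : u ≠ 0) (hv : v ≠ 0) (huv : φ (rankOne 𝕜 u v) = 0) {x : E} (hx : inner 𝕜 v x = 0)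
    (y : E) : φ (rankOne 𝕜 x y) = 0 := by
  have htriple : rankOne 𝕜 x u * rankOne 𝕜 u v * rankOne 𝕜 v y
      + rankOne 𝕜 v y * rankOne 𝕜 u v * rankOne 𝕜 x u
      = (inner 𝕜 u u * inner 𝕜 v v) • rankOne 𝕜 x y := by
    simp [ContinuousLinearMap.mul_def, rankOne_comp_rankOne, hx, smul_smul]
  have := hφ.map_sandwich_add_sandwich (rankOne 𝕜 u v) (rankOne 𝕜 x u) (rankOne 𝕜 v y)
  rw [htriple, map_smul, huv, mul_zero, zero_mul, mul_zero, zero_mul, add_zero] at this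
  exact (smul_eq_zero.1 this).resolve_left
    (mul_ne_zero (inner_self_ne_zero.2 hu) (inner_self_ne_zero.2 hv))

theorem map_rankOne_eq_zero (hφ : PreservesSquares φ) (hinf : ¬ FiniteDimensional 𝕜 E)
    {T : E →L[𝕜] E} (hT0 : T ≠ 0) (hT : φ T = 0) (x y : E) : φ (rankOne 𝕜 x y) = 0 := by
  obtain ⟨u, hu⟩ := DFunLike.ne_iff.1 hT0
  set v := T u
  have hu0 : u ≠ 0 := by rintro rfl; exact hu (map_zero T)
  have huv := hφ.map_rankOne_apply_eq_zero hT hu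
  obtain ⟨w, hw0, hvw⟩ := exists_ne_zero_inner_eq_zero hinf v
  have hww := hφ.map_rankOne_eq_zero_of_inner_eq_zero hu0 hu huv hvw w
  have hvy := hφ.map_rankOne_eq_zero_of_inner_eq_zero hw0 hw0 hww (inner_eq_zero_symm.1 hvw) y
  set c := inner 𝕜 v x / inner 𝕜 v v
  have hxc : inner 𝕜 v (x - c • v) = 0 := by
    rw [inner_sub_right, inner_smul_right, div_mul_cancel₀ _ (inner_self_ne_zero.2 hu), sub_self]
  have hdecomp : rankOne 𝕜 x y = rankOne 𝕜 (x - c • v) y + c • rankOne 𝕜 v y := by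
    simp
  rw [hdecomp, map_add, map_smul, hvy, smul_zero, add_zero]
  exact hφ.map_rankOne_eq_zero_of_inner_eq_zero hu0 hu huv hxc y

end RankOne

section CoordinateProjections

variable {𝕜 E F Φ : Type*} [RCLike 𝕜] [NormedAddCommGroup E] [InnerProductSpace 𝕜 E]
  [CompleteSpace E] [NormedAddCommGroup F] [NormedSpace 𝕜 F]
  [FunLike Φ (E →L[𝕜] E) (F →L[𝕜] F)] [AddMonoidHomClass Φ (E →L[𝕜] E) (F →L[𝕜] F)] {φ : Φ}

theorem eq_zero_of_map_proj_eq_zero {ι : Type*} [Countable ι] (hφ : PreservesSquares φ)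
    (b : HilbertBasis ι 𝕜 E) {S : Set ι} (hS : S.Infinite) (hSc : Sᶜ.Infinite)
    (h : φ (b.proj S) = 0) (T : E →L[𝕜] E) : φ T = 0 := by
  have := hS.to_subtype
  have := hSc.to_subtype
  obtain ⟨τ, hτ, hτS⟩ :=
    S.exists_involutive_perm_preimage_eq_compl nonempty_equiv_of_countable.some
  have hc : φ (b.proj Sᶜ) = 0 := by
    rw [← hτS, ← b.permute_mul_proj_mul_permute hτ, hφ.map_sandwich, h, mul_zero, zero_mul]
  have h1 : φ 1 = 0 := by rw [← b.proj_add_proj_compl S, map_add, h, hc, add_zero]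
  exact hφ.eq_zero_of_map_one h1 T

theorem eq_zero_of_map_rankOne_eq_zero [SeparableSpace F] (hφ : PreservesSquares φ)
    (b : HilbertBasis (ℕ × ℤ) 𝕜 E) (h : ∀ x y, φ (rankOne 𝕜 x y) = 0) (T : E →L[𝕜] E) :
    φ T = 0 := by
  have hfin : ∀ S : Set (ℕ × ℤ), S.Finite → φ (b.proj S) = 0 := fun S hS => by
    lift S to Finset (ℕ × ℤ) using hS
    simp [b.proj_finset, h]
  by_cases hr : ∃ r, φ (b.proj (dyadicGraph r)) = 0
  · obtain ⟨r, hr⟩ := hr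
    exact hφ.eq_zero_of_map_proj_eq_zero b (dyadicGraph_infinite r)
      (dyadicGraph_compl_infinite r) hr T
  push Not at hr
  have hidem : ∀ r, IsIdempotentElem (φ (b.proj (dyadicGraph r))) := fun r => by
    rw [IsIdempotentElem, ← hφ, b.proj_mul_proj, Set.inter_self]
  have horth : Pairwise fun r s => φ (b.proj (dyadicGraph r)) * φ (b.proj (dyadicGraph s)) = 0 :=
    fun r s hrs => (hidem r).mul_eq_zero_of_mul_add_mul_eq_zero <| by
      rw [← hφ.map_mul_add_mul_swap, b.proj_mul_proj, b.proj_mul_proj,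
        Set.inter_comm (dyadicGraph s), map_add, hfin _ (dyadicGraph_inter_finite hrs), add_zero]
  exact absurd (countable_of_isIdempotentElem_of_mul_eq_zero hidem hr horth) not_countable

end CoordinateProjections

end PreservesSquares

/-- Let `H` be a complex separable infinite-dimensional Hilbert space and let
`φ : B(H) → B(H)` be a Jordan homomorphism, i.e. a complex-linear map with `φ(A²) = φ(A)²`
for all `A`. Then `φ` is either injective or identically zero. -/
theorem jordan_hom_injective_or_zero
    {H : Type*} [NormedAddCommGroup H] [InnerProductSpace ℂ H] [CompleteSpace H]
    [TopologicalSpace.SeparableSpace H] (hinf : ¬ FiniteDimensional ℂ H)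
    (φ : (H →L[ℂ] H) →ₗ[ℂ] (H →L[ℂ] H))
    (hJ : ∀ A : H →L[ℂ] H, φ (A * A) = φ A * φ A) :
    Function.Injective φ ∨ φ = 0 := by
  refine or_iff_not_imp_left.2 fun hinj => ?_
  obtain ⟨T, hT, hT0⟩ : ∃ T, φ T = 0 ∧ T ≠ 0 := by
    simpa [injective_iff_map_eq_zero] using hinj
  obtain ⟨b⟩ := HilbertBasis.nonempty_of_countable (ℕ × ℤ) hinf
  have hrankOne := PreservesSquares.map_rankOne_eq_zero hJ hinf hT0 hT
  exact LinearMap.ext (PreservesSquares.eq_zero_of_map_rankOne_eq_zero hJ b hrankOne)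
end

section
/- Let Φ : ℓ∞(ℕ, B(H)) → B(H) be an irreducible Jordan homomorphism, i.e. a Jordan homomorphism such that the only closed subspaces of H invariant under every operator in the range of Φ are {0} and H. Then there exist a positive integer n and an injective unital Jordan homomorphism φ : B(H) → B(H) such that Φ((A_k)_k) = φ(A_n) for every (A_k)_k ∈ ℓ∞(ℕ, B(H)). -/
lemma half_cancel {B : Type*} [AddCommGroup B] [Module ℂ B] {a b : B}
    (h : a + a = b + b) : a = b := by
  have h2 : (2:ℂ) • a = (2:ℂ) • b := by rw [two_smul, two_smul]; exact h
  exact smul_right_injective B (two_ne_zero' ℂ) h2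

section Jordan
variable {A : Type*} {B : Type*} [Ring A] [Algebra ℂ A] [Ring B] [Algebra ℂ B]
variable (Φ : A →ₗ[ℂ] B) (hJ : ∀ x, Φ (x * x) = Φ x * Φ x)

include hJ in
lemma jmul (x y : A) : Φ (x * y + y * x) = Φ x * Φ y + Φ y * Φ x := by
  have h := hJ (x + y)
  rw [map_add Φ x y] at h
  rw [show (x+y)*(x+y) = x*x + (x*y+y*x) + y*y from by noncomm_ring] at h
  rw [map_add, map_add, hJ, hJ] at h
  rw [show (Φ x + Φ y) * (Φ x + Φ y)
      = Φ x * Φ x + (Φ x * Φ y + Φ y * Φ x) + Φ y * Φ y from by noncomm_ring] at h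
  exact add_left_cancel (add_right_cancel h)

include hJ in
lemma jtriple (x y : A) : Φ (x * y * x) = Φ x * Φ y * Φ x := by
  have h1 := jmul Φ hJ x (x * y + y * x)
  rw [show x * (x * y + y * x) + (x * y + y * x) * x
      = (x * x * y + y * (x * x)) + (x * y * x + x * y * x) from by noncomm_ring] at h1
  rw [map_add, jmul Φ hJ (x*x) y, hJ, jmul Φ hJ x y] at h1
  have h2 : Φ (x * y * x + x * y * x)
      = Φ x * Φ y * Φ x + Φ x * Φ y * Φ x := by
    have expand : Φ x * (Φ x * Φ y + Φ y * Φ x) + (Φ x * Φ y + Φ y * Φ x) * Φ x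
        = (Φ x * Φ x * Φ y + Φ y * (Φ x * Φ x)) + (Φ x * Φ y * Φ x + Φ x * Φ y * Φ x) := by
      noncomm_ring
    rw [expand] at h1
    exact add_left_cancel h1
  rw [map_add] at h2
  exact half_cancel h2

include hJ in
lemma jtriple3 (x y z : A) :
    Φ (x * y * z + z * y * x) = Φ x * Φ y * Φ z + Φ z * Φ y * Φ x := by
  have h := jtriple Φ hJ (x + z) y
  rw [map_add Φ x z] at h
  rw [show (x + z) * y * (x + z) = x*y*x + (x*y*z + z*y*x) + z*y*z from by noncomm_ring] at h
  rw [map_add, map_add, jtriple Φ hJ x y, jtriple Φ hJ z y] at h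
  rw [show (Φ x + Φ z) * Φ y * (Φ x + Φ z)
      = Φ x * Φ y * Φ x + (Φ x * Φ y * Φ z + Φ z * Φ y * Φ x) + Φ z * Φ y * Φ z from by
    noncomm_ring] at h
  exact add_left_cancel (add_right_cancel h)

include hJ in
lemma jcentral_comm {e : A} (he : e * e = e) (hc : ∀ x, e * x = x * e) (x : A) :
    Φ e * Φ x = Φ x * Φ e := by
  have h1 : Φ (e * x) + Φ (e * x) = Φ e * Φ x + Φ x * Φ e := by
    rw [← map_add]
    have key : e * x + e * x = e * x + x * e := by nth_rewrite 2 [hc x]; rfl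
    rw [key, jmul Φ hJ]
  have h2 : Φ (e * x) = Φ e * Φ x * Φ e := by
    have exe : e * x * e = e * x := by
      rw [mul_assoc, ← hc x, ← mul_assoc, he]
    rw [← exe, jtriple Φ hJ]
  have hpp : Φ e * Φ e = Φ e := by rw [← hJ, he]
  set p := Φ e
  set y := Φ x
  rw [h2] at h1
  -- h1 : p*y*p + p*y*p = p*y + y*p
  have hl : p * y = p * y * p := by
    have h3 := congrArg (fun t => p * t) h1
    simp only [mul_add] at h3
    rw [show p * (p * y * p) = p * y * p from by rw [← mul_assoc, ← mul_assoc, hpp],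
        show p * (p * y) = p * y from by rw [← mul_assoc, hpp],
        show p * (y * p) = p * y * p from by rw [← mul_assoc]] at h3
    exact (add_right_cancel h3).symm
  have hr : y * p = p * y * p := by
    have h3 := congrArg (fun t => t * p) h1
    simp only [add_mul] at h3
    rw [show p * y * p * p = p * y * p from by rw [mul_assoc, mul_assoc, hpp, ← mul_assoc],
        show y * p * p = y * p from by rw [mul_assoc, hpp]] at h3
    exact (add_left_cancel h3).symm
  rw [hl, hr]

end Jordan

lemma idem_orth {B : Type*} [Ring B] [Algebra ℂ B] {e f : B}
    (he : e * e = e) (h : e * f + f * e = 0) : e * f = 0 := by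
  have h1 : e * f + e * (f * e) = 0 := by
    have := congrArg (fun t => e * t) h
    simpa [mul_add, ← mul_assoc, he] using this
  have h2 : e * (f * e) + f * e = 0 := by
    have h5 := congrArg (fun t => t * e) h
    simp only [add_mul, zero_mul] at h5
    rw [mul_assoc f e e, he, mul_assoc e f e] at h5
    exact h5
  have h3 : e * f = f * e := by
    have h4 := h1.trans h2.symm
    exact add_right_cancel (by rw [add_comm (e*(f*e)) (f*e)] at h4; exact h4.symm) |>.symm
  have h4 : e * f + e * f = 0 + 0 := by
    rw [add_zero]; nth_rewrite 2 [h3]; exact h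
  exact half_cancel h4

/-- the isometry trick: from a suitable "pointwise infinite rank projection" P in the
kernel-like submodule K, deduce the local unit E lies in K. -/
lemma ring_trick {A : Type*} [Ring A] [Algebra ℂ A] (K : Submodule ℂ A)
    (hK1 : ∀ j ∈ K, ∀ x : A, x * j * x ∈ K)
    (hK2 : ∀ j ∈ K, ∀ a b : A, a * j * b + b * j * a ∈ K)
    (E P u₁ u₂ v₁ v₂ : A) (hP : P ∈ K) (idemP : P * P = P)
    (hvu₁ : v₁ * u₁ = E) (hvu₂ : v₂ * u₂ = E)
    (h12 : v₁ * u₂ = 0) (h21 : v₂ * u₁ = 0)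
    (hPu₁ : P * u₁ = u₁) (hPu₂ : P * u₂ = u₂)
    (hv₁P : v₁ * P = v₁) (hv₂P : v₂ * P = v₂)
    (hPE : P * E = P) (hv₁E : v₁ * E = v₁) (hv₂E : v₂ * E = v₂) : E ∈ K := by
  obtain ⟨e₁, he₁⟩ : ∃ t, t = u₁ * P * v₁ := ⟨_, rfl⟩
  obtain ⟨e₂, he₂⟩ : ∃ t, t = u₂ * P * v₂ := ⟨_, rfl⟩
  obtain ⟨x, hx⟩ : ∃ t, t = u₂ * P * v₁ + u₁ * P * v₂ := ⟨_, rfl⟩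
  have hj₁ : v₁ * P * u₁ + u₁ * P * v₁ ∈ K := hK2 P hP v₁ u₁
  have hj₂ : v₂ * P * u₂ + u₂ * P * v₂ ∈ K := hK2 P hP v₂ u₂
  have hvPu₁ : v₁ * P * u₁ = E := by rw [hv₁P, hvu₁]
  have hvPu₂ : v₂ * P * u₂ = E := by rw [hv₂P, hvu₂]
  have hj₁' : E + e₁ ∈ K := by rw [← hvPu₁, he₁]; exact hj₁
  have hj₂' : E + e₂ ∈ K := by rw [← hvPu₂, he₂]; exact hj₂
  -- auxiliary word reductions
  have PEP : P * E * P = P := by rw [hPE, idemP]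
  have w1 : u₂ * P * v₁ * (u₁ * P * v₂) = e₂ := by
    rw [he₂]
    calc u₂ * P * v₁ * (u₁ * P * v₂) = u₂ * ((P * (v₁ * u₁)) * P) * v₂ := by noncomm_ring
    _ = u₂ * P * v₂ := by rw [hvu₁, PEP]
  have w2 : u₁ * P * v₂ * (u₂ * P * v₁) = e₁ := by
    rw [he₁]
    calc u₁ * P * v₂ * (u₂ * P * v₁) = u₁ * ((P * (v₂ * u₂)) * P) * v₁ := by noncomm_ring
    _ = u₁ * P * v₁ := by rw [hvu₂, PEP]
  have w3 : u₂ * P * v₁ * (u₂ * P * v₁) = 0 := by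
    calc u₂ * P * v₁ * (u₂ * P * v₁) = u₂ * ((P * (v₁ * u₂)) * P) * v₁ := by noncomm_ring
    _ = 0 := by rw [h12]; noncomm_ring
  have w4 : u₁ * P * v₂ * (u₁ * P * v₂) = 0 := by
    calc u₁ * P * v₂ * (u₁ * P * v₂) = u₁ * ((P * (v₂ * u₁)) * P) * v₂ := by noncomm_ring
    _ = 0 := by rw [h21]; noncomm_ring
  have hx2 : x * x = e₁ + e₂ := by
    rw [hx, add_mul, mul_add, mul_add, w1, w2, w3, w4, zero_add, add_zero, add_comm]
  have hxE : x * E = x := by rw [hx, add_mul, mul_assoc _ v₁ E, mul_assoc _ v₂ E, hv₁E, hv₂E]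
  have hxe₁ : x * e₁ = u₂ * P * v₁ := by
    rw [hx, he₁, add_mul]
    have t1 : u₂ * P * v₁ * (u₁ * P * v₁) = u₂ * P * v₁ := by
      calc u₂ * P * v₁ * (u₁ * P * v₁) = u₂ * ((P * (v₁ * u₁)) * P) * v₁ := by noncomm_ring
      _ = u₂ * P * v₁ := by rw [hvu₁, PEP]
    have t2 : u₁ * P * v₂ * (u₁ * P * v₁) = 0 := by
      calc u₁ * P * v₂ * (u₁ * P * v₁) = u₁ * ((P * (v₂ * u₁)) * P) * v₁ := by noncomm_ring
      _ = 0 := by rw [h21]; noncomm_ring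
    rw [t1, t2, add_zero]
  have hxe₂ : x * e₂ = u₁ * P * v₂ := by
    rw [hx, he₂, add_mul]
    have t1 : u₂ * P * v₁ * (u₂ * P * v₂) = 0 := by
      calc u₂ * P * v₁ * (u₂ * P * v₂) = u₂ * ((P * (v₁ * u₂)) * P) * v₂ := by noncomm_ring
      _ = 0 := by rw [h12]; noncomm_ring
    have t2 : u₁ * P * v₂ * (u₂ * P * v₂) = u₁ * P * v₂ := by
      calc u₁ * P * v₂ * (u₂ * P * v₂) = u₁ * ((P * (v₂ * u₂)) * P) * v₂ := by noncomm_ring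
      _ = u₁ * P * v₂ := by rw [hvu₂, PEP]
    rw [t1, t2, zero_add]
  have hs₁ : x * (E + e₁) * x = (e₁ + e₂) + e₂ := by
    rw [mul_add, add_mul, hxE, hx2]
    rw [show x * e₁ * x = e₂ from by
      rw [hxe₁, hx, mul_add, w3, w1, zero_add]]
  have hs₂ : x * (E + e₂) * x = (e₁ + e₂) + e₁ := by
    rw [mul_add, add_mul, hxE, hx2]
    rw [show x * e₂ * x = e₁ from by
      rw [hxe₂, hx, mul_add, w2, w4, add_zero]]
  have hS₁ : (e₁ + e₂) + e₂ ∈ K := by rw [← hs₁]; exact hK1 _ hj₁' x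
  have hS₂ : (e₁ + e₂) + e₁ ∈ K := by rw [← hs₂]; exact hK1 _ hj₂' x
  -- combination : E = (1/2) • ( (E+e₁) + (E+e₂) - (1/3)•(sum) )
  have hsum : ((e₁ + e₂) + e₂) + ((e₁ + e₂) + e₁) ∈ K := K.add_mem hS₁ hS₂
  have h3 : (3:ℂ) • (e₁ + e₂) = ((e₁ + e₂) + e₂) + ((e₁ + e₂) + e₁) := by
    have : (3:ℂ) • (e₁ + e₂) = (e₁+e₂) + (e₁+e₂) + (e₁+e₂) := by
      rw [show (3:ℂ) = 2 + 1 from by norm_num, add_smul, two_smul, one_smul]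
    rw [this]; abel
  have he12 : e₁ + e₂ ∈ K := by
    have := K.smul_mem ((3:ℂ)⁻¹) hsum
    rw [← h3, ← smul_assoc] at this
    norm_num at this
    exact this
  have h2E : (2:ℂ) • E = ((E + e₁) + (E + e₂)) - (e₁ + e₂) := by
    rw [two_smul]; abel
  have := K.smul_mem ((2:ℂ)⁻¹) (K.sub_mem (K.add_mem hj₁' hj₂') he12)
  rw [← h2E, ← smul_assoc] at this
  norm_num at this
  exact this

open Function

lemma not_countable_funBool : ¬ Countable (ℕ → Bool) := by
  intro h
  obtain ⟨f, hf⟩ := exists_surjective_nat (ℕ → Bool)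
  obtain ⟨n, hn⟩ := hf (fun k => !(f k k))
  have h2 := congrFun hn n
  cases hb : f n n <;> rw [hb] at h2 <;> simp at h2

/-- a pairwise-separated family in a separable metric space has countable index type -/
lemma countable_of_separated {X : Type*} [MetricSpace X] [TopologicalSpace.SeparableSpace X]
    {I : Type*} (v : I → X) {ε : ℝ} (hε : 0 < ε)
    (hsep : ∀ i j : I, i ≠ j → ε ≤ dist (v i) (v j)) : Countable I := by
  obtain ⟨D, hDc, hDd⟩ := TopologicalSpace.exists_countable_dense X
  have choice : ∀ i : I, ∃ d ∈ D, dist (v i) d < ε / 2 := by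
    intro i
    obtain ⟨d, hd1, hd2⟩ := Metric.dense_iff.mp hDd (v i) (ε/2) (by linarith)
    exact ⟨d, hd2, by rw [Metric.mem_ball] at hd1; rw [dist_comm]; exact hd1⟩
  choose d hd hdist using choice
  haveI := hDc.to_subtype
  have hinj : Function.Injective (fun i => (⟨d i, hd i⟩ : D)) := by
    intro i j hij
    by_contra hne
    have h1 := hsep i j hne
    have hdd : d i = d j := congrArg Subtype.val hij
    have h4 : dist (v i) (v j) < ε := by
      calc dist (v i) (v j) ≤ dist (v i) (d i) + dist (d i) (v j) := dist_triangle _ _ _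
      _ < ε/2 + ε/2 := by
          have h5 : dist (d i) (v j) < ε/2 := by rw [hdd, dist_comm]; exact hdist j
          exact add_lt_add (hdist i) h5
      _ = ε := by ring
    linarith
  exact Countable.of_equiv _ (Equiv.ofInjective _ hinj).symm

/-- an uncountable family of pairwise orthogonal idempotent operators on a separable
space must contain zero -/
lemma exists_zero_idem {H : Type*} [NormedAddCommGroup H] [InnerProductSpace ℂ H]
    [TopologicalSpace.SeparableSpace H]
    (q : (ℕ → Bool) → (H →L[ℂ] H))
    (hidem : ∀ α, q α * q α = q α)
    (horth : ∀ α β, α ≠ β → q α * q β = 0) : ∃ α, q α = 0 := by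
  by_contra hno
  push_neg at hno
  have hvec : ∀ α, ∃ u : H, q α u ≠ 0 := by
    intro α
    by_contra hu
    push_neg at hu
    exact hno α (ContinuousLinearMap.ext fun u => by rw [hu u]; rfl)
  choose w hw using hvec
  set v : (ℕ → Bool) → H := fun α => (‖q α (w α)‖)⁻¹ • (q α (w α)) with hv
  have hnorm : ∀ α, ‖v α‖ = 1 := by
    intro α
    rw [hv]
    simp only [norm_smul, norm_inv, norm_norm]
    rw [inv_mul_cancel₀ (norm_ne_zero_iff.mpr (hw α))]
  have hfix : ∀ α, q α (v α) = v α := by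
    intro α
    rw [hv]
    simp only [ContinuousLinearMap.map_smul_of_tower]
    congr 1
    have h5 : q α (q α (w α)) = (q α * q α) (w α) := rfl
    rw [h5, hidem]
  have hkill : ∀ α β, α ≠ β → q α (v β) = 0 := by
    intro α β hne
    rw [hv]
    simp only [ContinuousLinearMap.map_smul_of_tower]
    have h5 : q α (q β (w β)) = (q α * q β) (w β) := rfl
    rw [h5, horth α β hne]
    simp
  have hQpos : ∀ α, 0 < ‖q α‖ := fun α => norm_pos_iff.mpr (hno α)
  have hsep : ∀ α β, α ≠ β → 1 ≤ ‖q α‖ * ‖v α - v β‖ := by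
    intro α β hne
    have h6 : q α (v α - v β) = v α := by
      rw [map_sub, hfix, hkill α β hne, sub_zero]
    calc (1:ℝ) = ‖v α‖ := (hnorm α).symm
    _ = ‖q α (v α - v β)‖ := by rw [h6]
    _ ≤ ‖q α‖ * ‖v α - v β‖ := (q α).le_opNorm _
  set m : (ℕ → Bool) → ℕ := fun α => ⌈‖q α‖⌉₊ with hm
  have hbig : ∃ n : ℕ, ¬ ({α | m α = n}).Countable := by
    by_contra hcnt
    push_neg at hcnt
    have huniv : (Set.univ : Set (ℕ → Bool)).Countable := by
      have he : (Set.univ : Set (ℕ → Bool)) = ⋃ n : ℕ, {α | m α = n} := by ext α; simp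
      rw [he]
      exact Set.countable_iUnion hcnt
    rw [Set.countable_univ_iff] at huniv
    exact not_countable_funBool huniv
  obtain ⟨n, hn⟩ := hbig
  have hcnt2 : Countable {α // m α = n} := by
    rcases isEmpty_or_nonempty {α // m α = n} with he | hne
    · infer_instance
    · obtain ⟨⟨α₀, hα₀⟩⟩ := hne
      have hn0 : (0:ℝ) < n := by
        have : 0 < m α₀ := Nat.ceil_pos.mpr (hQpos α₀)
        rw [hα₀] at this
        exact_mod_cast this
      apply countable_of_separated (fun s : {α // m α = n} => v s.1)
        (ε := 1 / n) (by positivity)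
      rintro ⟨α, hα⟩ ⟨β, hβ⟩ hne'
      have hab : α ≠ β := fun h => hne' (Subtype.ext h)
      have h1 := hsep α β hab
      have hqn : ‖q α‖ ≤ n := by
        have := Nat.le_ceil ‖q α‖
        calc ‖q α‖ ≤ (⌈‖q α‖⌉₊ : ℝ) := this
        _ = (n:ℝ) := by exact_mod_cast congrArg (Nat.cast (R := ℝ)) hα
      rw [dist_eq_norm, div_le_iff₀ hn0]
      calc (1:ℝ) ≤ ‖q α‖ * ‖v α - v β‖ := h1
      _ ≤ (n:ℝ) * ‖v α - v β‖ := mul_le_mul_of_nonneg_right hqn (norm_nonneg _)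
      _ = ‖v α - v β‖ * n := by ring
  exact hn (Set.countable_coe_iff.mp hcnt2)

namespace JHcomb

/-- encoded initial segment of length k+1 -/
noncomputable def code (α : ℕ → Bool) (k : ℕ) : ℕ :=
  Encodable.encode (List.ofFn fun i : Fin (k+1) => α i)

lemma code_inj_k (α : ℕ → Bool) : Function.Injective (code α) := by
  intro k k' h
  have h2 := Encodable.encode_injective h
  have := congrArg List.length h2
  simpa using this

lemma code_eq_iff {α β : ℕ → Bool} {k k' : ℕ} (h : code α k = code β k') :
    k = k' ∧ ∀ i ≤ k, α i = β i := by
  have h2 := Encodable.encode_injective h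
  have hlen := congrArg List.length h2
  simp only [List.length_ofFn] at hlen
  have hk : k = k' := by omega
  subst hk
  rw [List.ofFn_inj] at h2
  refine ⟨rfl, fun i hi => ?_⟩
  have := congrFun h2 ⟨i, by omega⟩
  simpa using this

lemma code_ev_diff {α β : ℕ → Bool} (hne : α ≠ β) :
    ∃ N, ∀ k, N ≤ k → code α k ≠ code β k := by
  have : ∃ i, α i ≠ β i := by
    by_contra h; push_neg at h; exact hne (funext h)
  obtain ⟨i, hi⟩ := this
  exact ⟨i, fun k hk h => hi ((code_eq_iff h).2 i hk)⟩

/-- the almost disjoint family of infinite subsets of ℕ -/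
def ADset (α : ℕ → Bool) : Set ℕ := Set.range (code α)

lemma ADset_infinite (α : ℕ → Bool) : (ADset α).Infinite :=
  Set.infinite_range_of_injective (code_inj_k α)

lemma ADset_almost_disjoint {α β : ℕ → Bool} (hne : α ≠ β) :
    (ADset α ∩ ADset β).Finite := by
  obtain ⟨N, hN⟩ := code_ev_diff hne
  apply Set.Finite.subset ((Set.finite_Iio N).image (code α))
  rintro x ⟨⟨k, rfl⟩, ⟨k', hk'⟩⟩
  have h2 := code_eq_iff hk'.symm
  obtain ⟨rfl, -⟩ := h2
  by_cases hkN : k < N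
  · exact ⟨k, hkN, rfl⟩
  · exact absurd hk'.symm (hN k (by omega))

end JHcomb

noncomputable section
namespace JHop

open scoped ENNReal
open Classical

variable {ι : Type*}

abbrev L2 (ι : Type*) := lp (fun _ : ι => ℂ) 2

def papp (ρ : ι → Option ι) (x : ι → ℂ) : ι → ℂ := fun j => (ρ j).elim 0 x

def CoInj (ρ : ι → Option ι) : Prop :=
  ∀ ⦃j₁ j₂ i⦄, ρ j₁ = some i → ρ j₂ = some i → j₁ = j₂

lemma papp_eval {ρ : ι → Option ι} {x : ι → ℂ} {j i : ι} (h : ρ j = some i) :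
    papp ρ x j = x i := by simp [papp, h]

lemma papp_none {ρ : ι → Option ι} {x : ι → ℂ} {j : ι} (h : ρ j = none) :
    papp ρ x j = 0 := by simp [papp, h]

lemma key_summable {ρ : ι → Option ι} (hρ : CoInj ρ) (x : L2 ι) :
    Summable (fun j => ‖papp ρ x j‖ ^ (2:ℝ)) ∧
      ∑' j, ‖papp ρ x j‖ ^ (2:ℝ) ≤ ∑' i, ‖(x:ι → ℂ) i‖ ^ (2:ℝ) := by
  have hx : Summable (fun i => ‖(x : ι → ℂ) i‖ ^ (2:ℝ)) := by
    have h := (lp.memℓp x).summable (p := 2) (by norm_num)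
    simp only [ENNReal.toReal_ofNat] at h
    exact h
  set g : ι → ℝ := fun j => ‖papp ρ x j‖ ^ (2:ℝ) with hg
  set κ := {j : ι // (ρ j).isSome} with hκ
  have hval : Function.Injective (fun s : κ => s.1) := Subtype.val_injective
  have hzero : ∀ j ∉ Set.range (fun s : κ => s.1), g j = 0 := by
    rintro j hj
    have hn : ρ j = none := by
      rcases h : ρ j with _ | i
      · rfl
      · exact absurd ⟨⟨j, by simp [h]⟩, rfl⟩ hj
    show ‖papp ρ x j‖ ^ (2:ℝ) = 0
    rw [papp_none hn, norm_zero, Real.zero_rpow (by norm_num)]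
  set e : κ → ι := fun s => (ρ s.1).get s.2 with he'
  have he : ∀ s : κ, ρ s.1 = some (e s) := fun s => (Option.some_get s.2).symm
  have heinj : Function.Injective e := by
    intro s t hst
    have h1 := he s
    have h2 := he t
    rw [hst] at h1
    exact Subtype.ext (hρ h1 h2)
  have hcomp : (g ∘ fun s : κ => s.1) = (fun i => ‖(x:ι → ℂ) i‖ ^ (2:ℝ)) ∘ e := by
    funext s
    simp only [Function.comp_apply, hg]
    rw [papp_eval (he s)]
  have hsummable : Summable g := by
    rw [← hval.summable_iff hzero, hcomp]
    exact hx.comp_injective heinj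
  refine ⟨hsummable, ?_⟩
  have h1 : ∑' j, g j = ∑' s : κ, g s.1 := by
    rw [hval.tsum_eq]
    intro j hj
    by_contra hjr
    exact hj (hzero j hjr)
  rw [h1]
  have h2 : (fun s : κ => g s.1) = fun s : κ => ‖(x:ι → ℂ) (e s)‖ ^ (2:ℝ) :=
    funext fun s => congrFun hcomp s
  rw [h2]
  exact Summable.tsum_le_tsum_of_inj e heinj (fun c _ => by positivity) (fun s => le_refl _)
    (by rw [show (fun s : κ => ‖(x:ι→ℂ) (e s)‖ ^ (2:ℝ))
          = ((fun i => ‖(x:ι→ℂ) i‖ ^ (2:ℝ)) ∘ e) from rfl]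
        exact hx.comp_injective heinj) hx

lemma papp_memℓp {ρ : ι → Option ι} (hρ : CoInj ρ) (x : L2 ι) :
    Memℓp (papp ρ (x : ι → ℂ)) 2 := by
  apply memℓp_gen
  have h := (key_summable hρ x).1
  simp only [ENNReal.toReal_ofNat]
  exact h

/-- the contraction on ℓ² determined by a co-injective partial map -/
def pcomp (ρ : ι → Option ι) (hρ : CoInj ρ) : L2 ι →L[ℂ] L2 ι :=
  LinearMap.mkContinuous
    { toFun := fun x => (⟨papp ρ (x : ι → ℂ), papp_memℓp hρ x⟩ : L2 ι)
      map_add' := by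
        intro x y
        apply lp.ext
        funext j
        simp only [lp.coeFn_add, Pi.add_apply]
        show papp ρ ((x + y : L2 ι) : ι → ℂ) j = papp ρ x j + papp ρ y j
        rw [lp.coeFn_add]
        rcases h : ρ j with _ | i <;> simp [papp, h]
      map_smul' := by
        intro c x
        apply lp.ext
        funext j
        simp only [lp.coeFn_smul, Pi.smul_apply, RingHom.id_apply]
        show papp ρ ((c • x : L2 ι) : ι → ℂ) j = c • papp ρ x j
        rw [lp.coeFn_smul]
        rcases h : ρ j with _ | i <;> simp [papp, h] }
    1
    (by
      intro x
      rw [one_mul]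
      show ‖(⟨papp ρ (x : ι → ℂ), papp_memℓp hρ x⟩ : L2 ι)‖ ≤ ‖x‖
      by_contra hcon
      push_neg at hcon
      have h2 : (0:ℝ) < (2:ℝ≥0∞).toReal := by norm_num
      have hx2 := lp.norm_rpow_eq_tsum h2 x
      have hT2 := lp.norm_rpow_eq_tsum h2 (⟨papp ρ (x : ι → ℂ), papp_memℓp hρ x⟩ : L2 ι)
      have hle := (key_summable hρ x).2
      have hlt : ‖x‖ ^ (2:ℝ≥0∞).toReal
          < ‖(⟨papp ρ (x : ι → ℂ), papp_memℓp hρ x⟩ : L2 ι)‖ ^ (2:ℝ≥0∞).toReal :=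
        Real.rpow_lt_rpow (norm_nonneg _) hcon h2
      rw [hx2, hT2] at hlt
      have heq : ((⟨papp ρ (x : ι → ℂ), papp_memℓp hρ x⟩ : L2 ι) : ι → ℂ) = papp ρ x := rfl
      rw [heq] at hlt
      simp only [ENNReal.toReal_ofNat] at hlt
      linarith)

@[simp] lemma pcomp_apply (ρ : ι → Option ι) (hρ : CoInj ρ) (x : L2 ι) :
    ((pcomp ρ hρ x : L2 ι) : ι → ℂ) = papp ρ (x : ι → ℂ) := rfl

lemma pcomp_norm_le (ρ : ι → Option ι) (hρ : CoInj ρ) : ‖pcomp ρ hρ‖ ≤ 1 :=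
  LinearMap.mkContinuous_norm_le _ (by norm_num) _

lemma coInj_some : CoInj (fun j : ι => some j) := by
  intro a b i h1 h2
  rw [Option.some_inj] at h1 h2; rw [h1, h2]

lemma coInj_none : CoInj (fun _ : ι => (none : Option ι)) := by
  intro a b i h1 h2; simp at h1

lemma coInj_bind {ρ ρ' : ι → Option ι} (h : CoInj ρ) (h' : CoInj ρ') :
    CoInj (fun j => (ρ j).bind ρ') := by
  intro a b i h1 h2
  simp only [Option.bind_eq_some_iff] at h1 h2
  obtain ⟨a', ha1, ha2⟩ := h1
  obtain ⟨b', hb1, hb2⟩ := h2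
  have : a' = b' := h' ha2 hb2
  rw [this] at ha1
  exact h ha1 hb1

lemma pcomp_mul (ρ ρ' : ι → Option ι) (hρ : CoInj ρ) (hρ' : CoInj ρ') :
    pcomp ρ hρ * pcomp ρ' hρ' = pcomp (fun j => (ρ j).bind ρ') (coInj_bind hρ hρ') := by
  apply ContinuousLinearMap.ext
  intro x
  apply lp.ext
  funext j
  show papp ρ ((pcomp ρ' hρ' x : L2 ι) : ι → ℂ) j = papp (fun j => (ρ j).bind ρ') x j
  rw [pcomp_apply]
  rcases h : ρ j with _ | i
  · rw [papp_none h, papp_none (by simp [h])]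
  · rw [papp_eval h]
    show papp ρ' x i = papp (fun j => (ρ j).bind ρ') x j
    rcases h2 : ρ' i with _ | m
    · rw [papp_none h2, papp_none (by simp [h, h2])]
    · rw [papp_eval h2,
        papp_eval (show (fun j => (ρ j).bind ρ') j = some m by simp [h, h2])]

lemma pcomp_one : pcomp (fun j : ι => some j) coInj_some = 1 := by
  apply ContinuousLinearMap.ext
  intro x
  apply lp.ext
  funext j
  show papp (fun j => some j) x j = (x : ι → ℂ) j
  rw [papp_eval rfl]

lemma pcomp_zero : pcomp (fun _ : ι => (none : Option ι)) coInj_none = 0 := by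
  apply ContinuousLinearMap.ext
  intro x
  apply lp.ext
  funext j
  show papp (fun _ => none) x j = (0 : L2 ι) j
  rw [papp_none rfl]
  simp

lemma pcomp_congr {ρ ρ' : ι → Option ι} (hρ : CoInj ρ) (hρ' : CoInj ρ') (h : ρ = ρ') :
    pcomp ρ hρ = pcomp ρ' hρ' := by subst h; rfl

end JHop
noncomputable section
namespace JHop2
open JHop
open scoped ENNReal InnerProductSpace
open Classical

variable {ι : Type*}

def ρM (S : Set ι) : ι → Option ι := fun j => if j ∈ S then some j else none
def ρC (σ : ι → ι) : ι → Option ι := fun i => some (σ i)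
def ρE (σ : ι → ι) : ι → Option ι := fun j => if h : ∃ i, σ i = j then some h.choose else none

lemma coInj_ρM (S : Set ι) : CoInj (ρM S) := by
  intro a b i h1 h2
  simp only [ρM] at h1 h2
  split at h1 <;> split at h2 <;> simp_all
lemma coInj_ρC {σ : ι → ι} (hσ : Function.Injective σ) : CoInj (ρC σ) := by
  intro a b i h1 h2
  simp only [ρC, Option.some_inj] at h1 h2
  exact hσ (h1.trans h2.symm)
lemma ρE_eq_some {σ : ι → ι} {j i : ι} (h : ρE σ j = some i) : σ i = j := by
  simp only [ρE] at h
  split at h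
  · next hex => rw [Option.some_inj] at h; rw [← h]; exact hex.choose_spec
  · simp at h
lemma ρE_of_eq {σ : ι → ι} (hσ : Function.Injective σ) (i : ι) : ρE σ (σ i) = some i := by
  simp only [ρE]
  split
  · next hex => rw [Option.some_inj]; exact hσ hex.choose_spec
  · next hex => exact absurd ⟨i, rfl⟩ hex
lemma ρE_of_notMem {σ : ι → ι} {j : ι} (h : j ∉ Set.range σ) : ρE σ j = none := by
  simp only [ρE]
  split
  · next hex => exact absurd ⟨hex.choose, hex.choose_spec⟩ h
  · rfl
lemma coInj_ρE (σ : ι → ι) : CoInj (ρE σ) := by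
  intro a b i h1 h2
  rw [← ρE_eq_some h1, ← ρE_eq_some h2]

/-- multiplication (diagonal projection) operator -/
def PM (S : Set ι) : L2 ι →L[ℂ] L2 ι := pcomp (ρM S) (coInj_ρM S)
/-- the "co-isometry" (restriction along an injection) -/
def CC {σ : ι → ι} (hσ : Function.Injective σ) : L2 ι →L[ℂ] L2 ι := pcomp (ρC σ) (coInj_ρC hσ)
/-- the isometry (extension by zero along an injection) -/
def CE (σ : ι → ι) : L2 ι →L[ℂ] L2 ι := pcomp (ρE σ) (coInj_ρE σ)

lemma CC_mul_CE {σ : ι → ι} (hσ : Function.Injective σ) : CC hσ * CE σ = 1 := by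
  rw [CC, CE, pcomp_mul, ← pcomp_one]
  apply pcomp_congr
  funext j
  show (ρC σ j).bind (ρE σ) = some j
  simp only [ρC, Option.bind_some]
  exact ρE_of_eq hσ j

lemma PM_mul_CE {σ : ι → ι} {S : Set ι} (h : Set.range σ ⊆ S) : PM S * CE σ = CE σ := by
  rw [PM, CE, pcomp_mul]
  apply pcomp_congr
  funext j
  show (ρM S j).bind (ρE σ) = ρE σ j
  simp only [ρM]
  split
  · simp
  · next hj =>
    rw [Option.bind_none, ρE_of_notMem (fun hr => hj (h hr))]

lemma CC_mul_PM {σ : ι → ι} (hσ : Function.Injective σ) {S : Set ι} (h : Set.range σ ⊆ S) :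
    CC hσ * PM S = CC hσ := by
  rw [CC, PM, pcomp_mul]
  apply pcomp_congr
  funext i
  show (ρC σ i).bind (ρM S) = ρC σ i
  show (if σ i ∈ S then some (σ i) else none) = some (σ i)
  rw [if_pos (h ⟨i, rfl⟩)]

lemma CC_mul_CE_disjoint {σ₁ σ₂ : ι → ι} (hσ₁ : Function.Injective σ₁)
    (h : ∀ i j, σ₂ i ≠ σ₁ j) : CC hσ₁ * CE σ₂ = 0 := by
  rw [CC, CE, pcomp_mul, ← pcomp_zero]
  apply pcomp_congr
  funext j
  show (ρC σ₁ j).bind (ρE σ₂) = none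
  simp only [ρC, Option.bind_some]
  exact ρE_of_notMem (by rintro ⟨i, hi⟩; exact h i j hi)

lemma PM_mul_PM (S T : Set ι) : PM S * PM T = PM (S ∩ T) := by
  rw [PM, PM, pcomp_mul]
  apply pcomp_congr
  funext j
  show (ρM S j).bind (ρM T) = ρM (S ∩ T) j
  simp only [ρM]
  by_cases hS : j ∈ S <;> by_cases hT : j ∈ T <;>
    simp [hS, hT, Set.mem_inter_iff, ρM]

lemma PM_empty : PM (∅ : Set ι) = 0 := by
  rw [PM, ← pcomp_zero]
  apply pcomp_congr
  funext j
  simp [ρM]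

lemma PM_norm_le (S : Set ι) : ‖PM S‖ ≤ 1 := pcomp_norm_le _ _
lemma CC_norm_le {σ : ι → ι} (hσ : Function.Injective σ) : ‖CC hσ‖ ≤ 1 := pcomp_norm_le _ _
lemma CE_norm_le (σ : ι → ι) : ‖CE σ‖ ≤ 1 := pcomp_norm_le _ _

section conj
variable {H : Type*} [NormedAddCommGroup H] [InnerProductSpace ℂ H] [CompleteSpace H]

/-- conjugation of an ℓ² operator by a Hilbert basis -/
def Opp (b : HilbertBasis ι ℂ H) (t : L2 ι →L[ℂ] L2 ι) : H →L[ℂ] H :=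
  (((b.repr.symm.toContinuousLinearEquiv : L2 ι ≃L[ℂ] H) : L2 ι →L[ℂ] H).comp t).comp
    ((b.repr.toContinuousLinearEquiv : H ≃L[ℂ] L2 ι) : H →L[ℂ] L2 ι)

lemma Opp_apply (b : HilbertBasis ι ℂ H) (t : L2 ι →L[ℂ] L2 ι) (x : H) :
    Opp b t x = b.repr.symm (t (b.repr x)) := rfl

lemma Opp_mul (b : HilbertBasis ι ℂ H) (s t : L2 ι →L[ℂ] L2 ι) :
    Opp b s * Opp b t = Opp b (s * t) := by
  apply ContinuousLinearMap.ext
  intro x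
  show Opp b s (Opp b t x) = _
  rw [Opp_apply, Opp_apply, Opp_apply, b.repr.apply_symm_apply]
  rfl

lemma Opp_one (b : HilbertBasis ι ℂ H) : Opp b 1 = 1 := by
  apply ContinuousLinearMap.ext
  intro x
  rw [Opp_apply]
  show b.repr.symm (b.repr x) = x
  exact b.repr.symm_apply_apply x

lemma Opp_zero (b : HilbertBasis ι ℂ H) : Opp b 0 = 0 := by
  apply ContinuousLinearMap.ext
  intro x
  rw [Opp_apply]
  simp

lemma Opp_add (b : HilbertBasis ι ℂ H) (s t : L2 ι →L[ℂ] L2 ι) :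
    Opp b (s + t) = Opp b s + Opp b t := by
  apply ContinuousLinearMap.ext
  intro x
  rw [ContinuousLinearMap.add_apply, Opp_apply, Opp_apply, Opp_apply]
  simp

lemma Opp_norm_le (b : HilbertBasis ι ℂ H) (t : L2 ι →L[ℂ] L2 ι) : ‖Opp b t‖ ≤ ‖t‖ := by
  apply ContinuousLinearMap.opNorm_le_bound _ (norm_nonneg t)
  intro x
  rw [Opp_apply, b.repr.symm.norm_map]
  calc ‖t (b.repr x)‖ ≤ ‖t‖ * ‖b.repr x‖ := t.le_opNorm _
  _ = ‖t‖ * ‖x‖ := by rw [b.repr.norm_map]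

/-- rank one operator x ↦ ⟪v,x⟫ • u -/
def rk (u v : H) : H →L[ℂ] H := (innerSL ℂ v).smulRight u

lemma rk_apply (u v x : H) : rk u v x = ⟪v, x⟫_ℂ • u := rfl

lemma rk_mul_rk (u v w z : H) : rk u v * rk w z = ⟪v, w⟫_ℂ • rk u z := by
  apply ContinuousLinearMap.ext
  intro x
  show rk u v (rk w z x) = _
  rw [rk_apply, rk_apply, inner_smul_right, ContinuousLinearMap.smul_apply, rk_apply]
  simp [smul_smul, mul_comm]


lemma rk_zero_right (u : H) : rk u 0 = 0 := by
  apply ContinuousLinearMap.ext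
  intro x
  rw [rk_apply, inner_zero_left]
  simp

lemma rk_sub_right (u v w : H) : rk u v - rk u w = rk u (v - w) := by
  apply ContinuousLinearMap.ext
  intro x
  rw [ContinuousLinearMap.sub_apply, rk_apply, rk_apply, rk_apply, inner_sub_left, sub_smul]

lemma rk_ne_zero {u v : H} (hu : u ≠ 0) (hv : v ≠ 0) : rk u v ≠ 0 := by
  intro h
  have := congrFun (congrArg DFunLike.coe h) v
  rw [rk_apply] at this
  simp only [ContinuousLinearMap.zero_apply] at this
  rcases smul_eq_zero.mp this with h1 | h2
  · rw [inner_self_eq_zero] at h1; exact hv h1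
  · exact hu h2

lemma Opp_sum (b : HilbertBasis ι ℂ H) {γ : Type*} (T : Finset γ)
    (f : γ → (L2 ι →L[ℂ] L2 ι)) :
    Opp b (∑ i ∈ T, f i) = ∑ i ∈ T, Opp b (f i) := by
  induction T using Finset.induction with
  | empty => simpa using Opp_zero b
  | @insert a s ha ih =>
      rw [Finset.sum_insert ha, Finset.sum_insert ha, Opp_add, ih]

lemma Opp_PM_singleton (b : HilbertBasis ι ℂ H) (i : ι) :
    Opp b (PM ({i} : Set ι)) = rk (b i) (b i) := by
  apply ContinuousLinearMap.ext
  intro x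
  rw [Opp_apply, rk_apply]
  have key : PM ({i} : Set ι) (b.repr x) = ((b.repr x : ι → ℂ) i) • lp.single 2 i 1 := by
    apply lp.ext
    funext j
    show papp (ρM ({i} : Set ι)) (b.repr x) j
        = ((((b.repr x : ι → ℂ) i) • lp.single 2 i 1 : L2 ι) : ι → ℂ) j
    rw [lp.coeFn_smul]
    simp only [Pi.smul_apply, lp.single_apply]
    by_cases h : j = i
    · rw [papp_eval (show ρM ({i} : Set ι) j = some j by simp [ρM, h])]
      simp [Pi.single_apply, h]
    · rw [papp_none (show ρM ({i} : Set ι) j = none by simp [ρM, h])]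
      simp [Pi.single_apply, h]
  rw [key, map_smul, HilbertBasis.repr_symm_single, b.repr_apply_apply]

lemma Opp_PM_finset (b : HilbertBasis ι ℂ H) (T : Finset ι) :
    Opp b (PM (T : Set ι)) = ∑ i ∈ T, rk (b i) (b i) := by
  have h1 : PM (T : Set ι) = ∑ i ∈ T, PM ({i} : Set ι) := by
    apply ContinuousLinearMap.ext
    intro x
    apply lp.ext
    funext j
    rw [ContinuousLinearMap.sum_apply, lp.coeFn_sum]
    show papp (ρM (T : Set ι)) x j = _
    rw [Finset.sum_apply]
    have h2 : ∀ i ∈ T, ((PM ({i} : Set ι) x : L2 ι) : ι → ℂ) j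
        = if j = i then (x : ι → ℂ) j else 0 := by
      intro i _
      show papp (ρM ({i} : Set ι)) x j = _
      by_cases h : j = i
      · rw [papp_eval (show ρM ({i} : Set ι) j = some j by simp [ρM, h]), if_pos h]
      · rw [papp_none (show ρM ({i} : Set ι) j = none by simp [ρM, h]), if_neg h]
    rw [Finset.sum_congr rfl h2, Finset.sum_ite_eq T j (fun _ => (x : ι → ℂ) j)]
    by_cases hj : j ∈ T
    · rw [if_pos hj, papp_eval (show ρM (T : Set ι) j = some j by simp [ρM, hj])]
    · rw [if_neg hj, papp_none (show ρM (T : Set ι) j = none by simp [ρM, hj])]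
  rw [h1, Opp_sum]
  exact Finset.sum_congr rfl fun i _ => Opp_PM_singleton b i
end conj
end JHop2
set_option synthInstance.maxHeartbeats 1000000
set_option maxHeartbeats 2000000
noncomputable section
namespace JHinf
open scoped ENNReal
open Classical

variable {H : Type*} [NormedAddCommGroup H] [InnerProductSpace ℂ H] [CompleteSpace H]
  [Nontrivial H]

abbrev Linf (H : Type*) [NormedAddCommGroup H] [InnerProductSpace ℂ H] [CompleteSpace H]
  [Nontrivial H] := lp (fun _ : ℕ => H →L[ℂ] H) ∞

/-- build an element of ℓ∞ from a uniformly bounded sequence -/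
def mkinf (T : ℕ → (H →L[ℂ] H)) (C : ℝ) (h : ∀ k, ‖T k‖ ≤ C) : Linf H :=
  ⟨T, memℓp_infty ⟨C, by rintro - ⟨k, rfl⟩; exact h k⟩⟩

@[simp] lemma mkinf_coe (T : ℕ → (H →L[ℂ] H)) (C : ℝ) (h : ∀ k, ‖T k‖ ≤ C) (k : ℕ) :
    (mkinf T C h : ∀ _ : ℕ, H →L[ℂ] H) k = T k := rfl

/-- diagonal embedding at coordinate n -/
def iota (n : ℕ) (a : H →L[ℂ] H) : Linf H :=
  mkinf (fun k => if k = n then a else 0) ‖a‖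
    (fun k => by by_cases h : k = n <;> simp [h])

@[simp] lemma iota_coe (n : ℕ) (a : H →L[ℂ] H) (k : ℕ) :
    (iota n a : ∀ _ : ℕ, H →L[ℂ] H) k = if k = n then a else 0 := rfl

lemma iota_coe_self (n : ℕ) (a : H →L[ℂ] H) :
    (iota n a : ∀ _ : ℕ, H →L[ℂ] H) n = a := by simp

lemma iota_mul (n : ℕ) (a b : H →L[ℂ] H) : iota n a * iota n b = iota n (a * b) := by
  apply lp.ext
  rw [lp.infty_coeFn_mul]
  funext k
  by_cases h : k = n <;> simp [h]

lemma iota_add (n : ℕ) (a b : H →L[ℂ] H) : iota n a + iota n b = iota n (a + b) := by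
  apply lp.ext
  rw [lp.coeFn_add]
  funext k
  by_cases h : k = n <;> simp [h]

lemma iota_smul (n : ℕ) (c : ℂ) (a : H →L[ℂ] H) : c • iota n a = iota n (c • a) := by
  apply lp.ext
  rw [lp.coeFn_smul]
  funext k
  by_cases h : k = n <;> simp [h]

lemma iota_zero (n : ℕ) : iota n (0 : H →L[ℂ] H) = 0 := by
  apply lp.ext
  funext k
  show (if k = n then (0 : H →L[ℂ] H) else 0) = _
  by_cases h : k = n <;> simp [h] <;> rfl

/-- iota as a linear map -/
def iotaL (n : ℕ) : (H →L[ℂ] H) →ₗ[ℂ] Linf H where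
  toFun := iota n
  map_add' := fun a b => (iota_add n a b).symm
  map_smul' := fun c a => by rw [RingHom.id_apply, iota_smul]

/-- the minimal central projections -/
def Pn (n : ℕ) : Linf H := iota n 1

lemma Pn_central (n : ℕ) (x : Linf H) : Pn n * x = x * Pn n := by
  apply lp.ext
  rw [lp.infty_coeFn_mul, lp.infty_coeFn_mul]
  funext k
  show (Pn n : ∀ _ : ℕ, H →L[ℂ] H) k * (x : ∀ _ : ℕ, H →L[ℂ] H) k
    = (x : ∀ _ : ℕ, H →L[ℂ] H) k * (Pn n : ∀ _ : ℕ, H →L[ℂ] H) k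
  by_cases h : k = n <;> simp [Pn, h]

lemma Pn_idem (n : ℕ) : Pn n * Pn n = (Pn n : Linf H) := by
  rw [Pn, iota_mul, one_mul]

lemma iota_eq_Pn_mul (n : ℕ) (a : H →L[ℂ] H) :
    iota n a = Pn n * iota n a * Pn n := by
  rw [Pn, iota_mul, iota_mul, one_mul, mul_one]

lemma coe_one (k : ℕ) : ((1 : Linf H) : ∀ _ : ℕ, H →L[ℂ] H) k = 1 := by
  rw [lp.infty_coeFn_one]; rfl

lemma coe_mul (x y : Linf H) (k : ℕ) :
    ((x * y : Linf H) : ∀ _ : ℕ, H →L[ℂ] H) k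
      = (x : ∀ _ : ℕ, H →L[ℂ] H) k * (y : ∀ _ : ℕ, H →L[ℂ] H) k := by
  rw [lp.infty_coeFn_mul]; rfl

section main
variable (Φ : Linf H →ₗ[ℂ] (H →L[ℂ] H))
  (hJ : ∀ x, Φ (x * x) = Φ x * Φ x)
  (hirr : ∀ S : Submodule ℂ H, IsClosed (S : Set H) →
      (∀ (x : Linf H), ∀ v ∈ S, Φ x v ∈ S) → S = ⊥ ∨ S = ⊤)

include hirr in
lemma idem_zero_or_one (p : H →L[ℂ] H) (hp : p * p = p)
    (hcomm : ∀ x : Linf H, p * Φ x = Φ x * p) : p = 0 ∨ p = 1 := by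
  have hker := hirr (LinearMap.ker (p : H →ₗ[ℂ] H)) (ContinuousLinearMap.isClosed_ker p) ?inv
  case inv =>
    intro x v hv
    rw [LinearMap.mem_ker] at hv ⊢
    rw [ContinuousLinearMap.coe_coe] at hv
    have : (p : H →ₗ[ℂ] H) (Φ x v) = (p * Φ x) v := rfl
    rw [this, hcomm, ContinuousLinearMap.mul_apply, hv, map_zero]
  rcases hker with h | h
  · right
    apply ContinuousLinearMap.ext
    intro v
    have hv : p (p v - v) = 0 := by
      rw [map_sub, ← ContinuousLinearMap.mul_apply, hp, sub_self]
    have : p v - v ∈ LinearMap.ker (p : H →ₗ[ℂ] H) := LinearMap.mem_ker.mpr hv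
    rw [h, Submodule.mem_bot, sub_eq_zero] at this
    rw [this, ContinuousLinearMap.one_apply]
  · left
    apply ContinuousLinearMap.ext
    intro v
    have : v ∈ LinearMap.ker (p : H →ₗ[ℂ] H) := by rw [h]; trivial
    rw [LinearMap.mem_ker, ContinuousLinearMap.coe_coe] at this
    rw [this, ContinuousLinearMap.zero_apply]

include hJ hirr in
lemma hinf_independent (hinf : ¬ FiniteDimensional ℂ H) : Φ 1 = 1 := by
  have hid : Φ 1 * Φ 1 = Φ 1 := by rw [← hJ, one_mul]
  have hcomm := jcentral_comm (A := ↥(Linf H)) Φ hJ (e := (1 : Linf H)) (by rw [one_mul]) (fun x => by rw [one_mul, mul_one])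
  rcases idem_zero_or_one Φ hirr (Φ 1) hid hcomm with h | h
  · exfalso
    have hzero : ∀ x, Φ x = 0 := by
      intro x
      have h1 : (x : Linf H) = 1 * x * 1 := by rw [one_mul, mul_one]
      rw [h1, jtriple (A := ↥(Linf H)) Φ hJ, h, zero_mul, mul_zero]
    obtain ⟨v₀, hv₀⟩ := exists_ne (0 : H)
    have hS := hirr (Submodule.span ℂ {v₀}) (Submodule.closed_of_finiteDimensional _)
      (fun x v _ => by rw [hzero x]; exact (Submodule.span ℂ {v₀}).zero_mem)
    rcases hS with h2 | h2
    · have : v₀ ∈ Submodule.span ℂ {v₀} := Submodule.mem_span_singleton_self v₀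
      rw [h2, Submodule.mem_bot] at this
      exact hv₀ this
    · apply hinf
      have : FiniteDimensional ℂ (Submodule.span ℂ {v₀}) := inferInstance
      rw [h2] at this
      exact (Submodule.topEquiv (R := ℂ) (M := H)).finiteDimensional
  · exact h

include hJ hirr in
lemma Pn_zero_or_one (n : ℕ) : Φ (Pn n) = 0 ∨ Φ (Pn n) = 1 := by
  apply idem_zero_or_one Φ hirr
  · rw [← hJ, Pn_idem]
  · intro x
    exact jcentral_comm (A := ↥(Linf H)) Φ hJ (Pn_idem n) (Pn_central n) x

include hJ in
lemma fin_supp_zero (hallzero : ∀ m : ℕ, Φ (Pn m) = 0) :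
    ∀ (N : ℕ) (y : Linf H), (∀ k, N ≤ k → (y : ∀ _ : ℕ, H →L[ℂ] H) k = 0) → Φ y = 0 := by
  intro N
  induction N with
  | zero =>
      intro y hy
      have : y = 0 := by
        apply lp.ext
        funext k
        rw [hy k (Nat.zero_le k)]
        rfl
      rw [this, map_zero]
  | succ N ih =>
      intro y hy
      have hsplit : y = (y - iota N ((y : ∀ _ : ℕ, H →L[ℂ] H) N)) + iota N ((y : ∀ _ : ℕ, H →L[ℂ] H) N) := by
        rw [sub_add_cancel]
      rw [hsplit, map_add]
      have h1 : Φ (y - iota N ((y : ∀ _ : ℕ, H →L[ℂ] H) N)) = 0 := by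
        apply ih
        intro k hk
        rw [lp.coeFn_sub, Pi.sub_apply]
        by_cases hkN : k = N
        · subst hkN; simp
        · rw [hy k (by omega), iota_coe, if_neg hkN, sub_zero]
      have h2 : Φ (iota N ((y : ∀ _ : ℕ, H →L[ℂ] H) N)) = 0 := by
        rw [iota_eq_Pn_mul, jtriple (A := ↥(Linf H)) Φ hJ, hallzero, zero_mul, mul_zero]
      rw [h1, h2, add_zero]

end main
end JHinf
noncomputable section
namespace JHpipe
open JHop JHop2
open scoped InnerProductSpace

variable {H : Type*} [NormedAddCommGroup H] [InnerProductSpace ℂ H] [CompleteSpace H]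

lemma exists_perp (hinf : ¬ FiniteDimensional ℂ H) (w : H) :
    ∃ δ : H, δ ≠ 0 ∧ ⟪δ, w⟫_ℂ = 0 := by
  set K := Submodule.span ℂ ({w} : Set H)
  have hKfin : FiniteDimensional ℂ K := inferInstance
  have : Kᗮ ≠ ⊥ := by
    intro h
    rw [Submodule.orthogonal_eq_bot_iff] at h
    apply hinf
    have : FiniteDimensional ℂ K := inferInstance
    rw [h] at this
    exact (Submodule.topEquiv (R := ℂ) (M := H)).finiteDimensional
  obtain ⟨δ, hδK, hδ0⟩ := Submodule.exists_mem_ne_zero_of_ne_bot this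
  refine ⟨δ, hδ0, ?_⟩
  have := (Submodule.mem_orthogonal K δ).mp hδK w (Submodule.mem_span_singleton_self w)
  rw [inner_eq_zero_symm] at this
  exact this

variable (J : Submodule ℂ (H →L[ℂ] H))
  (hJ2 : ∀ j ∈ J, ∀ a b : H →L[ℂ] H, a * j * b + b * j * a ∈ J)

include hJ2 in
lemma pipe_step1 {ξ η : H} (hη : η ≠ 0) (hr : rk ξ η ∈ J) {δ : H} (hδξ : ⟪δ, ξ⟫_ℂ = 0) :
    rk ξ δ ∈ J := by
  have h := hJ2 _ hr (rk η δ) 1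
  rw [mul_one, one_mul, rk_mul_rk, rk_mul_rk, hδξ, zero_smul, zero_add] at h
  have hne : (⟪η, η⟫_ℂ) ≠ 0 := by
    rw [Ne, inner_self_eq_zero]; exact hη
  have h2 := J.smul_mem (⟪η, η⟫_ℂ)⁻¹ h
  rw [smul_smul, inv_mul_cancel₀ hne, one_smul] at h2
  exact h2

include hJ2 in
lemma pipe_step2 (hinf : ¬ FiniteDimensional ℂ H) {ξ η : H} (hξ : ξ ≠ 0) (hη : η ≠ 0)
    (hr : rk ξ η ∈ J) : ∀ u μ : H, ⟪μ, ξ⟫_ℂ = 0 → rk u μ ∈ J := by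
  intro u μ hμξ
  obtain ⟨δ, hδ0, hδξ⟩ := exists_perp hinf ξ
  have hj' : rk ξ δ ∈ J := pipe_step1 J hJ2 hη hr hδξ
  have h := hJ2 _ hj' (rk u ξ) (rk δ μ)
  -- (rk u ξ)*(rk ξ δ)*(rk δ μ) + (rk δ μ)*(rk ξ δ)*(rk u ξ)
  rw [rk_mul_rk, rk_mul_rk] at h
  -- first: ⟪ξ,ξ⟫ • rk u δ * rk δ μ ; second: ⟪μ,ξ⟫ • rk δ δ * rk u ξ
  rw [hμξ, zero_smul, zero_mul, add_zero, smul_mul_assoc, rk_mul_rk] at h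
  have hne : (⟪ξ, ξ⟫_ℂ * ⟪δ, δ⟫_ℂ) ≠ 0 := by
    apply mul_ne_zero <;> rw [Ne, inner_self_eq_zero] <;> assumption
  rw [smul_smul] at h
  have h2 := J.smul_mem (⟪ξ, ξ⟫_ℂ * ⟪δ, δ⟫_ℂ)⁻¹ h
  rw [smul_smul, inv_mul_cancel₀ hne, one_smul] at h2
  exact h2

include hJ2 in
lemma pipe_all (hinf : ¬ FiniteDimensional ℂ H)
    (hJ3 : ∀ j ∈ J, ∀ x : H →L[ℂ] H, j * x * j ∈ J)
    {c : H →L[ℂ] H} (hc : c ∈ J) (hc0 : c ≠ 0) :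
    ∀ u μ : H, rk u μ ∈ J := by
  -- produce a nonzero rank one in J
  have hv : ∃ v : H, c v ≠ 0 := by
    by_contra hcc
    push_neg at hcc
    exact hc0 (ContinuousLinearMap.ext fun v => by rw [hcc v]; rfl)
  obtain ⟨v, hcv⟩ := hv
  have hadj : ∃ u : H, (ContinuousLinearMap.adjoint c) u ≠ 0 := by
    by_contra hcc
    push_neg at hcc
    apply hc0
    have : ContinuousLinearMap.adjoint c = 0 :=
      ContinuousLinearMap.ext fun u => by rw [hcc u]; rfl
    have h2 := congrArg (ContinuousLinearMap.adjoint) this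
    rwa [ContinuousLinearMap.adjoint_adjoint, map_zero] at h2
  obtain ⟨u₀, hcu⟩ := hadj
  set ξ := c v with hξdef
  set η := (ContinuousLinearMap.adjoint c) u₀ with hηdef
  have hrk : rk ξ η = c * rk v u₀ * c := by
    apply ContinuousLinearMap.ext
    intro x
    rw [ContinuousLinearMap.mul_apply, ContinuousLinearMap.mul_apply, rk_apply, rk_apply]
    rw [map_smul, hηdef, ContinuousLinearMap.adjoint_inner_left]
  have hrJ : rk ξ η ∈ J := by rw [hrk]; exact hJ3 c hc (rk v u₀)
  -- now two passes of pipe_step2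
  intro x y
  by_cases hy : y = 0
  · rw [hy, rk_zero_right]; exact J.zero_mem
  obtain ⟨u₁, hu₁0, hu₁y⟩ := exists_perp hinf y
  obtain ⟨μ₀, hμ₀0, hμ₀ξ⟩ := exists_perp hinf ξ
  have hbase2 : rk u₁ μ₀ ∈ J := pipe_step2 J hJ2 hinf hcv hcu hrJ u₁ μ₀ hμ₀ξ
  have hfinal := pipe_step2 J hJ2 hinf hu₁0 hμ₀0 hbase2 x y
  apply hfinal
  rw [inner_eq_zero_symm]
  exact hu₁y

end JHpipe
noncomputable section
namespace JHmain
open JHop JHop2 JHinf JHpipe JHcomb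
open scoped ENNReal InnerProductSpace
open Classical

section blocks
variable {ι : Type*} (e : ι ≃ ℕ)

def p3 : (ℕ × ℕ × ℕ) ≃ ℕ := Denumerable.eqv _

/-- infinite blocks partitioning the basis index set -/
def Blk (m : ℕ) : Set ι := {j | (p3.symm (e j)).1 = m}

/-- injections of the whole index set into halves of blocks -/
def σB (m i : ℕ) : ι → ι := fun j => e.symm (p3 (m, i, e j))

lemma σB_inj (m i : ℕ) : Function.Injective (σB e m i) := by
  intro a c h
  simp only [σB] at h
  have h2 := p3.injective (e.symm.injective h)
  exact e.injective (congrArg (fun t => t.2.2) h2)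

lemma σB_mem (m i : ℕ) (j : ι) : σB e m i j ∈ Blk e m := by
  simp [σB, Blk]

lemma σB_disjoint (m : ℕ) {i i' : ℕ} (h : i ≠ i') (a b : ι) :
    σB e m i a ≠ σB e m i' b := by
  intro hc
  simp only [σB] at hc
  have h1 := p3.injective (e.symm.injective hc)
  exact h (congrArg (fun t => t.2.1) h1)

lemma Blk_disjoint {m m' : ℕ} (h : m ≠ m') : Blk e m ∩ Blk e m' = (∅ : Set ι) := by
  ext j
  simp only [Blk, Set.mem_inter_iff, Set.mem_setOf_eq, Set.mem_empty_iff_false, iff_false]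
  rintro ⟨h1, h2⟩
  exact h (h1.symm.trans h2)

end blocks

section caseA
variable {H : Type*} [NormedAddCommGroup H] [InnerProductSpace ℂ H] [CompleteSpace H]
  [Nontrivial H] [TopologicalSpace.SeparableSpace H]
variable {ι : Type*}
variable (Φ : Linf H →ₗ[ℂ] (H →L[ℂ] H))
  (hJ : ∀ x, Φ (x * x) = Φ x * Φ x)
  (hirr : ∀ S : Submodule ℂ H, IsClosed (S : Set H) →
      (∀ (x : Linf H), ∀ v ∈ S, Φ x v ∈ S) → S = ⊥ ∨ S = ⊤)

include hJ hirr in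
lemma not_all_Pn_zero (b : HilbertBasis ι ℂ H) (e : ι ≃ ℕ)
    (hinf : ¬ FiniteDimensional ℂ H)
    (hall : ∀ m : ℕ, Φ (Pn m) = 0) : False := by
  -- the sequences of block projections along eventually different functions
  set X : (ℕ → Bool) → Linf H := fun α =>
    mkinf (fun k => Opp b (PM (Blk e (code α k)))) 1
      (fun k => le_trans (Opp_norm_le b _) (PM_norm_le _)) with hX
  have hXcoe : ∀ α k, (X α : ∀ _ : ℕ, H →L[ℂ] H) k = Opp b (PM (Blk e (code α k))) :=
    fun α k => rfl
  have hXidem : ∀ α, X α * X α = X α := by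
    intro α
    apply lp.ext
    funext k
    rw [coe_mul, hXcoe, Opp_mul, PM_mul_PM, Set.inter_self]
  have hXorth : ∀ α β, α ≠ β → Φ (X α) * Φ (X β) = 0 := by
    intro α β hne
    apply idem_orth (B := H →L[ℂ] H)
    · rw [← hJ, hXidem]
    · rw [← jmul (A := ↥(Linf H)) Φ hJ]
      obtain ⟨N, hN⟩ := code_ev_diff hne
      apply fin_supp_zero Φ hJ hall N
      intro k hk
      rw [lp.coeFn_add, Pi.add_apply, coe_mul, coe_mul, hXcoe, hXcoe, Opp_mul, Opp_mul,
        PM_mul_PM, PM_mul_PM, Blk_disjoint e (hN k hk), Set.inter_comm,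
        Blk_disjoint e (hN k hk), PM_empty, Opp_zero, add_zero]
  obtain ⟨α₀, hα₀⟩ := exists_zero_idem (fun α => Φ (X α))
    (fun α => by rw [← hJ, hXidem]) hXorth
  -- feed the isometry trick
  set K := LinearMap.ker Φ with hK
  have hK1 : ∀ j ∈ K, ∀ x : Linf H, x * j * x ∈ K := by
    intro j hj x
    rw [hK, LinearMap.mem_ker] at hj ⊢
    rw [jtriple (A := ↥(Linf H)) Φ hJ, hj, mul_zero, zero_mul]
  have hK2 : ∀ j ∈ K, ∀ a c : Linf H, a * j * c + c * j * a ∈ K := by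
    intro j hj a c
    rw [hK, LinearMap.mem_ker] at hj ⊢
    rw [jtriple3 (A := ↥(Linf H)) Φ hJ, hj, mul_zero, zero_mul, mul_zero, zero_mul, add_zero]
  set u : ℕ → Linf H := fun i =>
    mkinf (fun k => Opp b (CE (σB e (code α₀ k) i))) 1
      (fun k => le_trans (Opp_norm_le b _) (CE_norm_le _)) with hu
  set v : ℕ → Linf H := fun i =>
    mkinf (fun k => Opp b (CC (σB_inj e (code α₀ k) i))) 1
      (fun k => le_trans (Opp_norm_le b _) (CC_norm_le _)) with hv
  have honemem : (1 : Linf H) ∈ K := by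
    apply ring_trick K hK1 hK2 1 (X α₀) (u 0) (u 1) (v 0) (v 1)
    · rw [hK, LinearMap.mem_ker]; exact hα₀
    · exact hXidem α₀
    · -- v 0 * u 0 = 1
      apply lp.ext; funext k
      rw [coe_mul]
      simp only [hu, hv, hX, mkinf_coe]
      rw [ Opp_mul, CC_mul_CE, Opp_one, coe_one]
    · apply lp.ext; funext k
      rw [coe_mul]
      simp only [hu, hv, hX, mkinf_coe]
      rw [ Opp_mul, CC_mul_CE, Opp_one, coe_one]
    · -- v 0 * u 1 = 0
      apply lp.ext; funext k
      rw [coe_mul]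
      simp only [hu, hv, hX, mkinf_coe]
      rw [ Opp_mul, CC_mul_CE_disjoint _ (σB_disjoint e _ (by norm_num)), Opp_zero]
      rfl
    · apply lp.ext; funext k
      rw [coe_mul]
      simp only [hu, hv, hX, mkinf_coe]
      rw [ Opp_mul, CC_mul_CE_disjoint _ (σB_disjoint e _ (by norm_num)), Opp_zero]
      rfl
    · -- X α₀ * u 0 = u 0
      apply lp.ext; funext k
      rw [coe_mul]
      simp only [hu, hv, hX, mkinf_coe]
      rw [ Opp_mul, PM_mul_CE (by rintro x ⟨j, rfl⟩; exact σB_mem e _ _ j)]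
    · apply lp.ext; funext k
      rw [coe_mul]
      simp only [hu, hv, hX, mkinf_coe]
      rw [ Opp_mul, PM_mul_CE (by rintro x ⟨j, rfl⟩; exact σB_mem e _ _ j)]
    · -- v 0 * X α₀ = v 0
      apply lp.ext; funext k
      rw [coe_mul]
      simp only [hu, hv, hX, mkinf_coe]
      rw [ Opp_mul, CC_mul_PM _ (by rintro x ⟨j, rfl⟩; exact σB_mem e _ _ j)]
    · apply lp.ext; funext k
      rw [coe_mul]
      simp only [hu, hv, hX, mkinf_coe]
      rw [ Opp_mul, CC_mul_PM _ (by rintro x ⟨j, rfl⟩; exact σB_mem e _ _ j)]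
    · exact mul_one _
    · exact mul_one _
    · exact mul_one _
  rw [hK, LinearMap.mem_ker] at honemem
  rw [hinf_independent Φ hJ hirr hinf] at honemem
  obtain ⟨v₀, hv₀⟩ := exists_ne (0 : H)
  have := congrFun (congrArg DFunLike.coe honemem) v₀
  simp at this
  exact hv₀ this

end caseA
end JHmain
noncomputable section
namespace JHfinal
open JHop JHop2 JHinf JHpipe JHcomb JHmain
open scoped ENNReal InnerProductSpace
open Classical

variable {H : Type*} [NormedAddCommGroup H] [InnerProductSpace ℂ H] [CompleteSpace H]
  [Nontrivial H] [TopologicalSpace.SeparableSpace H]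

lemma exists_basis_data (hinf : ¬ FiniteDimensional ℂ H) :
    ∃ (w : Set H) (b : HilbertBasis w ℂ H), Nonempty (↥w ≃ ℕ) := by
  obtain ⟨w, b, hb⟩ := exists_hilbertBasis ℂ H
  haveI hcnt : Countable ↥w := by
    apply countable_of_separated (fun i : w => (b i : H)) (ε := 1) one_pos
    intro i j hij
    have hon := b.orthonormal
    have h1 : ‖(b i : H)‖ = 1 := hon.1 i
    have h2 : ‖(b j : H)‖ = 1 := hon.1 j
    have h3 : ⟪(b i : H), (b j : H)⟫_ℂ = 0 := hon.2 hij
    rw [dist_eq_norm]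
    have h4 := norm_sub_sq (𝕜 := ℂ) (b i : H) (b j : H)
    rw [h1, h2, h3] at h4
    simp only [map_zero, one_pow] at h4
    nlinarith [norm_nonneg ((b i : H) - (b j : H))]
  haveI hinfw : Infinite ↥w := by
    by_contra hfin
    rw [not_infinite_iff_finite] at hfin
    apply hinf
    obtain ⟨S, hdense, hfinS⟩ : ∃ S : Submodule ℂ H,
        S.topologicalClosure = ⊤ ∧ FiniteDimensional ℂ S :=
      ⟨_, b.dense_span, FiniteDimensional.span_of_finite ℂ (Set.finite_range _)⟩
    have hclosed : IsClosed (S : Set H) := Submodule.closed_of_finiteDimensional S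
    have h5 : S.topologicalClosure = S := by
      apply SetLike.ext'
      exact (Submodule.topologicalClosure_coe S).trans hclosed.closure_eq
    have hSeq : S = ⊤ := by rw [← h5]; exact hdense
    rw [hSeq] at hfinS
    exact (Submodule.topEquiv (R := ℂ) (M := H)).finiteDimensional
  haveI : Encodable ↥w := Encodable.ofCountable _
  haveI : Denumerable ↥w := Denumerable.ofEncodableOfInfinite ↥w
  exact ⟨w, b, ⟨Denumerable.eqv ↥w⟩⟩

variable {ι : Type*}
variable (Φ : Linf H →ₗ[ℂ] (H →L[ℂ] H))
  (hJ : ∀ x, Φ (x * x) = Φ x * Φ x)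

include hJ in
lemma iota_ker_trivial (b : HilbertBasis ι ℂ H) (e : ι ≃ ℕ)
    (hinf : ¬ FiniteDimensional ℂ H) (n : ℕ) (hPn1 : Φ (Pn n) = 1)
    (c : H →L[ℂ] H) (hc : Φ (iota n c) = 0) : c = 0 := by
  by_contra hc0
  set ψ : (H →L[ℂ] H) →ₗ[ℂ] (H →L[ℂ] H) := Φ.comp (iotaL n) with hψ
  have hψapp : ∀ a, ψ a = Φ (iota n a) := fun a => rfl
  have hψJ : ∀ a, ψ (a * a) = ψ a * ψ a := by
    intro a
    rw [hψapp, hψapp, ← iota_mul, hJ]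
  set J : Submodule ℂ (H →L[ℂ] H) := LinearMap.ker ψ with hJdef
  have hJ2 : ∀ j ∈ J, ∀ a c : H →L[ℂ] H, a * j * c + c * j * a ∈ J := by
    intro j hj a c'
    rw [hJdef, LinearMap.mem_ker] at hj ⊢
    rw [jtriple3 (A := (H →L[ℂ] H)) ψ hψJ, hj, mul_zero, zero_mul, mul_zero, zero_mul, add_zero]
  have hJ3 : ∀ j ∈ J, ∀ x : H →L[ℂ] H, j * x * j ∈ J := by
    intro j hj x
    rw [hJdef, LinearMap.mem_ker] at hj ⊢
    rw [jtriple (A := (H →L[ℂ] H)) ψ hψJ, hj, zero_mul, mul_zero]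
  have hcJ : c ∈ J := by rw [hJdef, LinearMap.mem_ker, hψapp]; exact hc
  have hrkJ : ∀ u μ : H, rk u μ ∈ J := pipe_all J hJ2 hinf hJ3 hcJ hc0
  -- almost disjoint family of projections
  set S : (ℕ → Bool) → Set ι := fun α => e.symm '' (ADset α) with hSdef
  set P : (ℕ → Bool) → (H →L[ℂ] H) := fun α => Opp b (PM (S α)) with hPdef
  have hPidem : ∀ α, P α * P α = P α := by
    intro α
    rw [hPdef, Opp_mul, PM_mul_PM, Set.inter_self]
  have hPprod : ∀ α β, α ≠ β → P α * P β ∈ J := by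
    intro α β hne
    rw [hPdef, Opp_mul, PM_mul_PM]
    have hint : S α ∩ S β = e.symm '' (ADset α ∩ ADset β) := by
      rw [hSdef]
      exact (Set.image_inter e.symm.injective).symm
    have hfin : (S α ∩ S β).Finite := by
      rw [hint]
      exact (ADset_almost_disjoint hne).image _
    rw [← hfin.coe_toFinset, Opp_PM_finset]
    exact Submodule.sum_mem J (fun i _ => hrkJ _ _)
  have horth : ∀ α β, α ≠ β → ψ (P α) * ψ (P β) = 0 := by
    intro α β hne
    apply idem_orth (B := H →L[ℂ] H)
    · rw [← hψJ, hPidem]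
    · rw [← jmul (A := (H →L[ℂ] H)) ψ hψJ]
      have h1 : ψ (P α * P β) = 0 := LinearMap.mem_ker.mp (hPprod α β hne)
      have h2 : ψ (P β * P α) = 0 := LinearMap.mem_ker.mp (hPprod β α hne.symm)
      rw [map_add, h1, h2, add_zero]
  obtain ⟨α₀, hα₀⟩ := exists_zero_idem (fun α => ψ (P α))
    (fun α => by rw [← hψJ, hPidem]) horth
  -- the isometry trick at coordinate n
  set embE : ℕ ↪ ↥(ADset α₀) := (ADset_infinite α₀).natEmbedding with hembE
  set emb : ℕ → ℕ := fun m => (embE m : ℕ) with hembdef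
  have hembinj : Function.Injective emb := fun a c h =>
    embE.injective (Subtype.ext h)
  have hembmem : ∀ m, emb m ∈ ADset α₀ := fun m => (embE m).2
  set τ : ℕ → ι → ι := fun i j => e.symm (emb (2 * e j + i)) with hτdef
  have hτinj : ∀ i, Function.Injective (τ i) := by
    intro i a c h
    rw [hτdef] at h
    have h1 := hembinj (e.symm.injective h)
    have h2 : e a = e c := by omega
    exact e.injective h2
  have hτrange : ∀ i, Set.range (τ i) ⊆ S α₀ := by
    rintro i x ⟨j, rfl⟩
    rw [hSdef]
    exact ⟨emb (2 * e j + i), hembmem _, rfl⟩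
  have hτdisj : ∀ (a c : ι), τ 1 a ≠ τ 0 c := by
    intro a c h
    rw [hτdef] at h
    have h1 := hembinj (e.symm.injective h)
    omega
  set K := LinearMap.ker Φ with hK
  have hK1 : ∀ j ∈ K, ∀ x : Linf H, x * j * x ∈ K := by
    intro j hj x
    rw [hK, LinearMap.mem_ker] at hj ⊢
    rw [jtriple (A := ↥(Linf H)) Φ hJ, hj, mul_zero, zero_mul]
  have hK2 : ∀ j ∈ K, ∀ a c : Linf H, a * j * c + c * j * a ∈ K := by
    intro j hj a c'
    rw [hK, LinearMap.mem_ker] at hj ⊢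
    rw [jtriple3 (A := ↥(Linf H)) Φ hJ, hj, mul_zero, zero_mul, mul_zero, zero_mul, add_zero]
  have hPnK : Pn n ∈ K := by
    apply ring_trick K hK1 hK2 (Pn n) (iota n (P α₀))
      (iota n (Opp b (CE (τ 0)))) (iota n (Opp b (CE (τ 1))))
      (iota n (Opp b (CC (hτinj 0)))) (iota n (Opp b (CC (hτinj 1))))
    · rw [hK, LinearMap.mem_ker]
      exact hα₀
    · rw [iota_mul, hPidem]
    · rw [iota_mul, Opp_mul, CC_mul_CE, Opp_one]; rfl
    · rw [iota_mul, Opp_mul, CC_mul_CE, Opp_one]; rfl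
    · rw [iota_mul, Opp_mul, CC_mul_CE_disjoint _ hτdisj, Opp_zero, iota_zero]
    · rw [iota_mul, Opp_mul,
        CC_mul_CE_disjoint _ (fun a c h => hτdisj c a h.symm), Opp_zero, iota_zero]
    · rw [iota_mul, Opp_mul, PM_mul_CE (hτrange 0)]
    · rw [iota_mul, Opp_mul, PM_mul_CE (hτrange 1)]
    · rw [iota_mul, Opp_mul, CC_mul_PM _ (hτrange 0)]
    · rw [iota_mul, Opp_mul, CC_mul_PM _ (hτrange 1)]
    · show iota n (P α₀) * iota n 1 = iota n (P α₀)
      rw [iota_mul, mul_one]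
    · show iota n (Opp b (CC (hτinj 0))) * iota n 1 = _
      rw [iota_mul, mul_one]
    · show iota n (Opp b (CC (hτinj 1))) * iota n 1 = _
      rw [iota_mul, mul_one]
  rw [hK, LinearMap.mem_ker, hPn1] at hPnK
  obtain ⟨v₀, hv₀⟩ := exists_ne (0 : H)
  have := congrFun (congrArg DFunLike.coe hPnK) v₀
  simp at this
  exact hv₀ this

end JHfinal
open scoped ENNReal

open JHop JHop2 JHinf JHpipe JHcomb JHmain JHfinal

/-- Let `H` be a complex separable infinite-dimensional Hilbert space and
let `Φ : ℓ∞(ℕ, B(H)) → B(H)` be an irreducible Jordan homomorphism. Then there exist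
`n ∈ ℕ` and an injective unital Jordan homomorphism `φ : B(H) → B(H)` such that
`Φ((A_k)_k) = φ(A_n)` for every `(A_k)_k ∈ ℓ∞(ℕ, B(H))`. -/
theorem irreducible_jordan_hom_form
    {H : Type*} [NormedAddCommGroup H] [InnerProductSpace ℂ H] [CompleteSpace H]
    [TopologicalSpace.SeparableSpace H] [Nontrivial H]
    (hinf : ¬ FiniteDimensional ℂ H)
    (Φ : lp (fun _ : ℕ => H →L[ℂ] H) ∞ →ₗ[ℂ] (H →L[ℂ] H))
    (hJ : ∀ x, Φ (x * x) = Φ x * Φ x)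
    (hirr : ∀ S : Submodule ℂ H, IsClosed (S : Set H) →
        (∀ (x : lp (fun _ : ℕ => H →L[ℂ] H) ∞), ∀ v ∈ S, Φ x v ∈ S) →
        S = ⊥ ∨ S = ⊤) :
    ∃ (n : ℕ) (φ : (H →L[ℂ] H) →ₗ[ℂ] (H →L[ℂ] H)),
      (∀ A : H →L[ℂ] H, φ (A * A) = φ A * φ A) ∧ Function.Injective φ ∧ φ 1 = 1 ∧
      ∀ x : lp (fun _ : ℕ => H →L[ℂ] H) ∞, Φ x = φ ((x : ∀ _ : ℕ, H →L[ℂ] H) n) := by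
  classical
  obtain ⟨w, b, ⟨e⟩⟩ := exists_basis_data (H := H) hinf
  have hnot : ¬ ∀ m : ℕ, Φ (Pn m) = 0 := fun hall =>
    not_all_Pn_zero Φ hJ hirr b e hinf hall
  push_neg at hnot
  obtain ⟨n, hn⟩ := hnot
  have hn1 : Φ (Pn n) = 1 := (Pn_zero_or_one Φ hJ hirr n).resolve_left hn
  refine ⟨n, Φ.comp (iotaL n), ?_, ?_, ?_, ?_⟩
  · intro A
    show Φ (iota n (A * A)) = Φ (iota n A) * Φ (iota n A)
    rw [← iota_mul, hJ]
  · -- injectivity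
    intro a c hac
    have h1 : Φ (iota n (a - c)) = 0 := by
      show (Φ.comp (iotaL n)) (a - c) = 0
      rw [map_sub]
      show Φ (iota n a) - Φ (iota n c) = 0
      rw [show Φ (iota n a) = Φ (iota n c) from hac, sub_self]
    have := iota_ker_trivial Φ hJ b e hinf n hn1 (a - c) h1
    exact sub_eq_zero.mp this
  · show Φ (iota n 1) = 1
    exact hn1
  · intro x
    set xn := (x : ∀ _ : ℕ, H →L[ℂ] H) n with hxn
    have hy : Φ (x - iota n xn) = 0 := by
      set y := x - iota n xn with hy
      set Q : Linf H := 1 - Pn n with hQ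
      have hyn : (y : ∀ _ : ℕ, H →L[ℂ] H) n = 0 := by
        rw [hy, lp.coeFn_sub, Pi.sub_apply, iota_coe_self, hxn, sub_self]
      have hQQ : y = Q * y * Q := by
        apply lp.ext
        funext k
        rw [coe_mul, coe_mul]
        have hQcoe : (Q : ∀ _ : ℕ, H →L[ℂ] H) k = if k = n then 0 else 1 := by
          rw [hQ, lp.coeFn_sub, Pi.sub_apply, coe_one]
          show 1 - (iota n 1 : ∀ _ : ℕ, H →L[ℂ] H) k = _
          by_cases h : k = n <;> simp [h]
        rw [hQcoe]
        by_cases h : k = n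
        · rw [if_pos h, zero_mul, mul_zero, h, hyn]
        · rw [if_neg h, one_mul, mul_one]
      have hQ0 : Φ Q = 0 := by
        rw [hQ, map_sub, hinf_independent Φ hJ hirr hinf, hn1, sub_self]
      rw [hQQ, jtriple (A := ↥(Linf H)) Φ hJ, hQ0, zero_mul, mul_zero]
    have h2 : Φ x - Φ (iota n xn) = 0 := by rw [← map_sub]; exact hy
    have h3 : Φ x = Φ (iota n xn) := by
      have := sub_eq_zero.mp h2
      exact this
    exact h3
end
end
end
end
end
end
end

section
/- There is no Jordan isomorphism (i.e. bijective complex-linear map Φ with Φ(A²) = Φ(A)² for all A) from ℓ∞(ℕ, B(H)) onto C(βℕ, B(H)). In particular, the C*-algebras ℓ∞(ℕ, B(H)) and C(βℕ, B(H)) are not isomorphic even as Jordan algebras. -/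
/-!
Being a central projection is a Jordan-algebraic property, so a Jordan isomorphism `Φ` sends the
minimal central projections `zₖ = lp.single ∞ k 1` of `ℓ∞(ℕ, A)` to central projections of
`C(X, A)`; for a central algebra `A` these are `{0, 1}`-valued, and `Φ (zₖ * v) = Φ zₖ * Φ v`.
By Riesz's lemma an infinite-dimensional `A` contains a bounded `1`-separated sequence `Qₖ`.
For `gₖ = Φ zₖ * Qₖ`, a gliding hump argument bounds the `k`-th coordinates of `Φ⁻¹ gₖ`, so they
assemble into one `x ∈ ℓ∞` with `Φ zₖ * Φ x = gₖ`. At a point `tₖ` where `Φ zₖ tₖ = 1` this gives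
`Φ x tₖ = Qₖ`: the compact range of `Φ x` would contain a `1`-separated sequence.
-/

open scoped ENNReal

open Filter Function Set

section Jordan

variable {R : Type*} [NonUnitalRing R]

/-- The Jordan multiplication `x ∘ y = x * y + y * x` by `w` commutes with every Jordan
multiplication: `(w ∘ a) ∘ b = w ∘ (a ∘ b)`. -/
def IsJordanCentral (w : R) : Prop :=
  ∀ a b : R, (w * a + a * w) * b + b * (w * a + a * w) = w * (a * b + b * a) + (a * b + b * a) * w

theorem isJordanCentral_of_forall_commute {z : R} (hz : ∀ y, Commute z y) : IsJordanCentral z := by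
  intro a b
  have h : (z * a + a * z) * b + b * (z * a + a * z) - (z * (a * b + b * a) + (a * b + b * a) * z)
      = a * (z * b - b * z) - (z * b - b * z) * a := by noncomm_ring
  rwa [(hz b).eq, sub_self, mul_zero, zero_mul, sub_zero, sub_eq_zero] at h

theorem IsJordanCentral.commute_commutator {w : R} (hw : IsJordanCentral w) (a b : R) :
    Commute (w * b - b * w) a := by
  have h : (w * b - b * w) * a - a * (w * b - b * w)
      = w * (a * b + b * a) + (a * b + b * a) * w
        - ((w * a + a * w) * b + b * (w * a + a * w)) := by
    noncomm_ring
  rwa [hw a b, sub_self, sub_eq_zero] at h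

variable {S F : Type*} [NonUnitalRing S] [FunLike F R S] [AddMonoidHomClass F R S]

theorem map_mul_add_mul_swap_of_map_mul_self {Φ : F} (hΦ : ∀ x, Φ (x * x) = Φ x * Φ x)
    (x y : R) : Φ (x * y + y * x) = Φ x * Φ y + Φ y * Φ x := by
  have h := hΦ (x + y)
  have hR : (x + y) * (x + y) = x * x + (x * y + y * x) + y * y := by noncomm_ring
  have hS : (Φ x + Φ y) * (Φ x + Φ y) = Φ x * Φ x + (Φ x * Φ y + Φ y * Φ x) + Φ y * Φ y := by
    noncomm_ring
  rw [map_add, hS, hR, map_add, map_add, hΦ x, hΦ y] at h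
  exact add_left_cancel (add_right_cancel h)

theorem IsJordanCentral.map {Φ : F} (hΦ : ∀ x, Φ (x * x) = Φ x * Φ x) (hsurj : Surjective Φ)
    {z : R} (hz : IsJordanCentral z) : IsJordanCentral (Φ z) := by
  intro a b
  obtain ⟨x, rfl⟩ := hsurj a
  obtain ⟨y, rfl⟩ := hsurj b
  simp only [← map_mul_add_mul_swap_of_map_mul_self hΦ, hz x y]

theorem map_mul_of_forall_commute (K : Type*) [Field K] [NeZero (2 : K)] [Module K S] {Φ : F}
    (hΦ : ∀ x, Φ (x * x) = Φ x * Φ x) {z : R} (hz : ∀ y, Commute z y)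
    (hΦz : ∀ y, Commute (Φ z) y) (v : R) : Φ (z * v) = Φ z * Φ v := by
  have h := map_mul_add_mul_swap_of_map_mul_self hΦ z v
  rw [← (hz v).eq, ← (hΦz (Φ v)).eq, map_add, ← two_smul K, ← two_smul K] at h
  exact smul_right_injective S two_ne_zero h

theorem IsJordanCentral.commute {K A : Type*} [Field K] [NeZero (2 : K)] [Ring A] [Algebra K A]
    [Algebra.IsCentral K A] {w : A} (hw : IsJordanCentral w) (b : A) : Commute w b := by
  have hscalar (b : A) : ∃ c : K, w * b - b * w = algebraMap K A c :=
    (Algebra.IsCentral.mem_center_iff K).mp <|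
      Subalgebra.mem_center_iff.mpr fun a => (hw.commute_commutator a b).symm.eq
  obtain ⟨c, hc⟩ := hscalar b
  obtain ⟨c', hc'⟩ := hscalar (b * b)
  by_cases hc0 : c = 0
  · rwa [hc0, map_zero, sub_eq_zero] at hc
  -- `[w, -]` is a derivation, so `[w, b²] = 2c • b`; for `c ≠ 0` this makes `b` a scalar
  have hsq : (2 * c) • b = algebraMap K A c' := by
    rw [← hc', show w * (b * b) - b * b * w = (w * b - b * w) * b + b * (w * b - b * w) by
      noncomm_ring, hc, ← Algebra.commutes, ← Algebra.smul_def, mul_smul, two_smul]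
  have hb : b = algebraMap K A ((2 * c)⁻¹ * c') := by
    rw [map_mul, ← hsq, ← Algebra.smul_def, smul_smul,
      inv_mul_cancel₀ (mul_ne_zero two_ne_zero hc0), one_smul]
  rw [hb]
  exact Algebra.commute_algebraMap_right _ _

end Jordan

namespace ContinuousMap

variable {X A : Type*} [TopologicalSpace X] [Ring A] [TopologicalSpace A] [IsTopologicalRing A]

theorem isJordanCentral_apply {w : C(X, A)} (hw : IsJordanCentral w) (t : X) :
    IsJordanCentral (w t) := fun a b => by
  simpa using DFunLike.congr_fun (hw (const X a) (const X b)) t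

theorem apply_eq_zero_or_one_of_isJordanCentral (K : Type*) [Field K] [NeZero (2 : K)]
    [Algebra K A] [Algebra.IsCentral K A] {w : C(X, A)} (hw : IsJordanCentral w)
    (hidem : IsIdempotentElem w) (t : X) : w t = 0 ∨ w t = 1 := by
  obtain ⟨c, hc⟩ := (Algebra.IsCentral.mem_center_iff K).mp <|
    Subalgebra.mem_center_iff.mpr fun b => ((isJordanCentral_apply hw t).commute (K := K) b).symm.eq
  have hidem_t : algebraMap K A c * algebraMap K A c = algebraMap K A c := by
    rw [← hc]; exact DFunLike.congr_fun hidem t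
  by_cases hc0 : c = 0
  · left; rw [hc, hc0, map_zero]
  · right
    calc w t = algebraMap K A c⁻¹ * (algebraMap K A c * algebraMap K A c) := by
          rw [hc, ← mul_assoc, ← map_mul, inv_mul_cancel₀ hc0, map_one, one_mul]
      _ = 1 := by rw [hidem_t, ← map_mul, inv_mul_cancel₀ hc0, map_one]

theorem commute_of_forall_apply_eq_zero_or_one {w : C(X, A)} (hw : ∀ t, w t = 0 ∨ w t = 1)
    (f : C(X, A)) : Commute w f :=
  ext fun t => by rcases hw t with h | h <;> simp [h]

end ContinuousMap

namespace lp

variable {ι : Type*} [DecidableEq ι] {B : ι → Type*} [∀ i, NormedRing (B i)]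

theorem single_one_mul_apply (k : ι) (x : lp B ∞) (j : ι) :
    (lp.single ∞ k (1 : B k) * x) j = if j = k then x j else 0 := by
  rw [infty_coeFn_mul, Pi.mul_apply, lp.single_apply]
  split_ifs with h
  · subst h; rw [Pi.single_eq_same, one_mul]
  · rw [Pi.single_eq_of_ne h, zero_mul]

theorem mul_single_one_apply (k : ι) (x : lp B ∞) (j : ι) :
    (x * lp.single ∞ k (1 : B k)) j = if j = k then x j else 0 := by
  rw [infty_coeFn_mul, Pi.mul_apply, lp.single_apply]
  split_ifs with h
  · subst h; rw [Pi.single_eq_same, mul_one]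
  · rw [Pi.single_eq_of_ne h, mul_zero]

theorem commute_single_one (k : ι) (x : lp B ∞) : Commute (lp.single ∞ k (1 : B k)) x :=
  lp.ext <| funext fun j => by rw [single_one_mul_apply, mul_single_one_apply]

theorem isIdempotentElem_single_one (k : ι) : IsIdempotentElem (lp.single ∞ k (1 : B k)) :=
  lp.ext <| funext fun j => by
    rw [single_one_mul_apply]
    split_ifs with h
    · rfl
    · rw [lp.single_apply, Pi.single_eq_of_ne h]

theorem single_one_mul_single_one_of_ne {k m : ι} (hkm : k ≠ m) :
    lp.single ∞ k (1 : B k) * lp.single ∞ m (1 : B m) = 0 :=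
  lp.ext <| funext fun j => by
    rw [single_one_mul_apply]
    split_ifs with h
    · subst h; rw [lp.single_apply, Pi.single_eq_of_ne hkm]; rfl
    · rfl

theorem single_one_ne_zero (k : ι) [Nontrivial (B k)] : lp.single ∞ k (1 : B k) ≠ 0 := fun h =>
  one_ne_zero (α := B k) <| by simpa using congr_arg (fun x : lp B ∞ => x k) h

theorem norm_single_one_mul_le (k : ι) (x : lp B ∞) : ‖lp.single ∞ k (1 : B k) * x‖ ≤ ‖x‖ :=
  norm_le_of_forall_le (norm_nonneg x) fun j => by
    rw [single_one_mul_apply]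
    split_ifs
    · exact norm_apply_le_norm ENNReal.top_ne_zero x j
    · simp

theorem exists_forall_single_one_mul_eq (y : ι → lp B ∞)
    (hy : BddAbove (range fun k => ‖y k‖)) :
    ∃ x : lp B ∞, ∀ k, lp.single ∞ k (1 : B k) * x = lp.single ∞ k 1 * y k := by
  obtain ⟨C, hC⟩ := hy
  refine ⟨⟨fun k => y k k, memℓp_infty ⟨C, ?_⟩⟩, fun k => lp.ext <| funext fun j => ?_⟩
  · rintro _ ⟨k, rfl⟩
    exact (norm_apply_le_norm ENNReal.top_ne_zero (y k) k).trans (hC ⟨k, rfl⟩)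
  · rw [single_one_mul_apply, single_one_mul_apply]
    split_ifs with h
    · subst h; rfl
    · rfl

end lp

theorem LinearMap.bddAbove_range_norm_apply_of_gliding_hump {𝕜 E F : Type*} [RCLike 𝕜]
    [SeminormedAddCommGroup E] [NormedSpace 𝕜 E] [NormedAddCommGroup F] [NormedSpace 𝕜 F]
    [CompleteSpace F] (Ψ : F →ₗ[𝕜] E) (L : ℕ → F →L[𝕜] F) (hΨL : ∀ k y, ‖Ψ (L k y)‖ ≤ ‖Ψ y‖)
    {g : ℕ → F} {C : ℝ} (hgC : ∀ k, ‖g k‖ ≤ C)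
    (hLg : ∀ j k, L j (g k) = if j = k then g k else 0) :
    BddAbove (Set.range fun k => ‖Ψ (g k)‖) := by
  by_contra hunb
  have hfreq (i : ℕ) : ∃ᶠ k in atTop, (4 : ℝ) ^ i < ‖Ψ (g k)‖ := fun hev =>
    hunb (isBoundedUnder_of_eventually_le (a := (4 : ℝ) ^ i) (by simpa using hev)).bddAbove_range
  obtain ⟨φ, hφ, hφg⟩ := extraction_forall_of_frequently hfreq
  have hsum : Summable fun i => ((2 : 𝕜)⁻¹) ^ i • g (φ i) := by
    refine Summable.of_norm_bounded (summable_geometric_two.mul_right C) fun i => ?_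
    rw [norm_smul, norm_pow, norm_inv, RCLike.norm_two, one_div]
    exact mul_le_mul_of_nonneg_left (hgC _) (by positivity)
  set y := ∑' i, ((2 : 𝕜)⁻¹) ^ i • g (φ i)
  have hLy (i : ℕ) : L (φ i) y = ((2 : 𝕜)⁻¹) ^ i • g (φ i) := by
    rw [(L (φ i)).map_tsum hsum, tsum_eq_single i fun j hj => ?_]
    · rw [map_smul, hLg, if_pos rfl]
    · rw [map_smul, hLg, if_neg (hφ.injective.ne hj).symm, smul_zero]
  -- `Ψ y` dominates each of its humps `Ψ (L (φ i) y) = 2⁻¹ ^ i • Ψ (g (φ i))`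
  have hy (i : ℕ) : (2 : ℝ) ^ i ≤ ‖Ψ y‖ := calc
    (2 : ℝ) ^ i = 2⁻¹ ^ i * 4 ^ i := by rw [← mul_pow]; norm_num
    _ ≤ 2⁻¹ ^ i * ‖Ψ (g (φ i))‖ := by gcongr; exact (hφg i).le
    _ = ‖Ψ (L (φ i) y)‖ := by rw [hLy, map_smul, norm_smul, norm_pow, norm_inv, RCLike.norm_two]
    _ ≤ ‖Ψ y‖ := hΨL _ _
  obtain ⟨n, hn⟩ := pow_unbounded_of_one_lt ‖Ψ y‖ one_lt_two
  exact (hy n).not_gt hn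

theorem IsCompact.not_forall_mem_of_pairwise_le_dist {α : Type*} [PseudoMetricSpace α]
    {K : Set α} (hK : IsCompact K) {f : ℕ → α} {ε : ℝ} (hε : 0 < ε)
    (hf : Pairwise fun m n => ε ≤ dist (f m) (f n)) : ¬ ∀ n, f n ∈ K := fun hfK => by
  obtain ⟨a, -, φ, hφ, hlim⟩ := hK.tendsto_subseq hfK
  obtain ⟨N, hN⟩ := Metric.cauchySeq_iff'.mp hlim.cauchySeq ε hε
  exact (hf (hφ.injective.ne (Nat.succ_ne_self N))).not_gt (hN (N + 1) N.le_succ)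

theorem FiniteDimensional.of_continuousLinearMap_self {𝕜 E : Type*} [NontriviallyNormedField 𝕜]
    [NormedAddCommGroup E] [NormedSpace 𝕜 E] [SeparatingDual 𝕜 E]
    (h : FiniteDimensional 𝕜 (E →L[𝕜] E)) : FiniteDimensional 𝕜 E := by
  nontriviality E
  obtain ⟨u, hu⟩ := exists_ne (0 : E)
  obtain ⟨g, hg⟩ := SeparatingDual.exists_eq_one (R := 𝕜) hu
  exact Module.Finite.of_surjective (ContinuousLinearMap.apply 𝕜 E u).toLinearMap
    fun v => ⟨g.smulRight v, by simp [hg]⟩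

section JordanIsomorphism

variable {ι 𝕜 A X : Type*} [DecidableEq ι] [RCLike 𝕜] [NormedRing A] [NormedAlgebra 𝕜 A]
  [Algebra.IsCentral 𝕜 A] [TopologicalSpace X] {Φ : lp (fun _ : ι => A) ∞ →ₗ[𝕜] C(X, A)}

theorem apply_map_single_one_eq_zero_or_one (hΦ : ∀ x, Φ (x * x) = Φ x * Φ x)
    (hsurj : Surjective Φ) (k : ι) (t : X) :
    Φ (lp.single ∞ k 1) t = 0 ∨ Φ (lp.single ∞ k 1) t = 1 :=
  ContinuousMap.apply_eq_zero_or_one_of_isJordanCentral 𝕜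
    ((isJordanCentral_of_forall_commute (lp.commute_single_one k)).map hΦ hsurj)
    (by rw [IsIdempotentElem, ← hΦ, lp.isIdempotentElem_single_one]) t

theorem map_single_one_mul (hΦ : ∀ x, Φ (x * x) = Φ x * Φ x) (hsurj : Surjective Φ) (k : ι)
    (v : lp (fun _ : ι => A) ∞) : Φ (lp.single ∞ k 1 * v) = Φ (lp.single ∞ k 1) * Φ v :=
  map_mul_of_forall_commute 𝕜 hΦ (lp.commute_single_one k)
    (ContinuousMap.commute_of_forall_apply_eq_zero_or_one
      (apply_map_single_one_eq_zero_or_one hΦ hsurj k)) v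

theorem map_single_one_mul_map_single_one (hΦ : ∀ x, Φ (x * x) = Φ x * Φ x)
    (hsurj : Surjective Φ) (j k : ι) :
    Φ (lp.single ∞ j 1) * Φ (lp.single ∞ k 1) = if j = k then Φ (lp.single ∞ k 1) else 0 := by
  rw [← map_single_one_mul hΦ hsurj]
  split_ifs with h
  · rw [h, lp.isIdempotentElem_single_one]
  · rw [lp.single_one_mul_single_one_of_ne h, map_zero]

theorem exists_apply_map_single_one_eq_one [Nontrivial A] (hΦ : ∀ x, Φ (x * x) = Φ x * Φ x)
    (hbij : Bijective Φ) (k : ι) : ∃ t, Φ (lp.single ∞ k 1) t = 1 := by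
  have hne : Φ (lp.single ∞ k 1) ≠ 0 :=
    (map_ne_zero_iff Φ hbij.1).mpr (lp.single_one_ne_zero k)
  obtain ⟨t, ht⟩ := not_forall.mp fun h => hne (ContinuousMap.ext h)
  exact ⟨t, (apply_map_single_one_eq_zero_or_one hΦ hbij.2 k t).resolve_left ht⟩

end JordanIsomorphism

section

variable {𝕜 A X : Type*} [RCLike 𝕜] [NormedRing A] [NormedAlgebra 𝕜 A] [Algebra.IsCentral 𝕜 A]
  [CompleteSpace A] [TopologicalSpace X] [CompactSpace X]

theorem exists_forall_map_single_one_mul_eq {Φ : lp (fun _ : ℕ => A) ∞ →ₗ[𝕜] C(X, A)}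
    (hΦ : ∀ x, Φ (x * x) = Φ x * Φ x) (hbij : Bijective Φ) {g : ℕ → C(X, A)} {C : ℝ}
    (hgC : ∀ k, ‖g k‖ ≤ C) (hg : ∀ j k, Φ (lp.single ∞ j 1) * g k = if j = k then g k else 0) :
    ∃ x, ∀ k, Φ (lp.single ∞ k 1) * Φ x = g k := by
  set Ψ := (LinearEquiv.ofBijective Φ hbij).symm.toLinearMap
  have hΦΨ (y : C(X, A)) : Φ (Ψ y) = y := (LinearEquiv.ofBijective Φ hbij).apply_symm_apply y
  have hΨ (k : ℕ) (y : C(X, A)) : Ψ (Φ (lp.single ∞ k 1) * y) = lp.single ∞ k 1 * Ψ y :=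
    hbij.1 (by rw [hΦΨ, map_single_one_mul hΦ hbij.2, hΦΨ])
  have hbdd := Ψ.bddAbove_range_norm_apply_of_gliding_hump
    (fun k => ContinuousLinearMap.mul 𝕜 _ (Φ (lp.single ∞ k 1)))
    (fun k y => by simpa only [ContinuousLinearMap.mul_apply', hΨ] using
      lp.norm_single_one_mul_le k (Ψ y)) hgC hg
  obtain ⟨x, hx⟩ := lp.exists_forall_single_one_mul_eq _ hbdd
  exact ⟨x, fun k => by
    rw [← map_single_one_mul hΦ hbij.2, hx, map_single_one_mul hΦ hbij.2, hΦΨ, hg, if_pos rfl]⟩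

theorem not_exists_jordan_bijective_lp_continuousMap (hA : ¬FiniteDimensional 𝕜 A) :
    ¬∃ Φ : lp (fun _ : ℕ => A) ∞ →ₗ[𝕜] C(X, A), Bijective Φ ∧ ∀ x, Φ (x * x) = Φ x * Φ x := by
  rintro ⟨Φ, hbij, hΦ⟩
  have : Nontrivial A := not_subsingleton_iff_nontrivial.mp fun _ => hA inferInstance
  obtain ⟨C, Q, hC, hQC, hQ⟩ := exists_seq_norm_le_one_le_norm_sub hA
  set g : ℕ → C(X, A) := fun k => Φ (lp.single ∞ k 1) * ContinuousMap.const X (Q k)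
  have hgC (k : ℕ) : ‖g k‖ ≤ C := (ContinuousMap.norm_le _ (by linarith)).mpr fun t => by
    rcases apply_map_single_one_eq_zero_or_one hΦ hbij.2 k t with h | h <;>
      simp [g, h, hQC k, (zero_lt_one.trans hC).le]
  have hg (j k : ℕ) : Φ (lp.single ∞ j 1) * g k = if j = k then g k else 0 := by
    rw [← mul_assoc, map_single_one_mul_map_single_one hΦ hbij.2, ite_mul, zero_mul]
  obtain ⟨x, hx⟩ := exists_forall_map_single_one_mul_eq hΦ hbij hgC hg
  refine (isCompact_range (Φ x).continuous).not_forall_mem_of_pairwise_le_dist one_pos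
    (f := Q) (by simpa only [dist_eq_norm] using hQ) fun k => ?_
  obtain ⟨t, ht⟩ := exists_apply_map_single_one_eq_one hΦ hbij k
  exact ⟨t, by simpa [g, ht] using DFunLike.congr_fun (hx k) t⟩

end

theorem no_jordan_isomorphism_linfty_to_continuous_stoneCech_general
    {H : Type*} [NormedAddCommGroup H] [InnerProductSpace ℂ H] [CompleteSpace H]
    (hinf : ¬ FiniteDimensional ℂ H) :
    ¬ ∃ Φ : lp (fun _ : ℕ => H →L[ℂ] H) ∞ →ₗ[ℂ] C(StoneCech ℕ, H →L[ℂ] H),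
        Function.Bijective Φ ∧ ∀ x, Φ (x * x) = Φ x * Φ x :=
  not_exists_jordan_bijective_lp_continuousMap
    fun h => hinf (FiniteDimensional.of_continuousLinearMap_self h)

/-- Let `H` be a complex separable infinite-dimensional Hilbert space. There
is no Jordan isomorphism (bijective complex-linear map `Φ` with `Φ(x²) = Φ(x)²`) from
`ℓ∞(ℕ, B(H))` onto `C(βℕ, B(H))`; in particular these C*-algebras are not isomorphic even
as Jordan algebras. -/
theorem no_jordan_isomorphism_linfty_to_continuous_stoneCech
    {H : Type*} [NormedAddCommGroup H] [InnerProductSpace ℂ H] [CompleteSpace H]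
    [TopologicalSpace.SeparableSpace H] [Nontrivial H]
    (hinf : ¬ FiniteDimensional ℂ H) :
    ¬ ∃ Φ : lp (fun _ : ℕ => H →L[ℂ] H) ∞ →ₗ[ℂ] C(StoneCech ℕ, H →L[ℂ] H),
        Function.Bijective Φ ∧ ∀ x, Φ (x * x) = Φ x * Φ x :=
  no_jordan_isomorphism_linfty_to_continuous_stoneCech_general hinf
end

section
/- Let Φ : ℓ∞(ℕ, B(H)) → ℓ∞(ℕ, B(H)) be an algebra automorphism (a bijective multiplicative complex-linear map). Then there are algebra automorphisms φ_n of B(H) (n ∈ ℕ) and a bijection φ : ℕ → ℕ such that Φ((A_k)_k) = (φ_n(A_{φ(n)}))_n for every (A_k)_k ∈ ℓ∞(ℕ, B(H)). -/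
/-!
The centre of `B(H)` consists of scalars, so the central idempotents of `ℓ∞(ℕ, B(H))` are exactly
the indicator sequences `1_S` of subsets `S ⊆ ℕ`, and `1_S * 1_T = 1_(S ∩ T)`. A multiplicative
bijection permutes central idempotents and preserves their products, hence induces an order
automorphism of `Set ℕ`; such an automorphism permutes the atoms `{n}`, which gives `e` with
`Φ 1_{e n} = 1_{n}`. Multiplying by `1_{e n}` cuts `x` down to its `e n`-th coordinate, so the
`n`-th coordinate of `Φ x` only depends on `x (e n)`, through `ψ n := (Φ ∘ single (e n)) n`.
-/

open scoped ENNReal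

namespace ContinuousLinearMap

variable {𝕜 E : Type*} [RCLike 𝕜] [NormedAddCommGroup E] [NormedSpace 𝕜 E] [Nontrivial E]

theorem exists_eq_algebraMap_of_mem_center {T : E →L[𝕜] E} (hT : T ∈ Set.center (E →L[𝕜] E)) :
    ∃ c : 𝕜, T = algebraMap 𝕜 (E →L[𝕜] E) c := by
  obtain ⟨v, hv⟩ := exists_ne (0 : E)
  obtain ⟨f, -, hfv⟩ := exists_dual_vector 𝕜 v (norm_ne_zero_iff.2 hv)
  have hfv₀ : f v ≠ 0 := by simpa [hfv] using hv
  refine ⟨f (T v) / f v, ContinuousLinearMap.ext fun x => ?_⟩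
  -- `T` commutes with the rank-one operator `y ↦ f y • x`; evaluate both products at `v`.
  have hcomm := congr($(Semigroup.mem_center_iff.1 hT (f.smulRight x)) v)
  simp only [mul_apply_eq_comp, smulRight_apply, map_smul] at hcomm
  rw [algebraMap_apply, div_eq_inv_mul, mul_smul, hcomm, inv_smul_smul₀ hfv₀]

theorem eq_zero_or_eq_one_of_mem_center {T : E →L[𝕜] E} (hT : T ∈ Set.center (E →L[𝕜] E))
    (hTi : IsIdempotentElem T) : T = 0 ∨ T = 1 := by
  obtain ⟨c, rfl⟩ := exists_eq_algebraMap_of_mem_center hT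
  have hc : IsIdempotentElem c := (algebraMap 𝕜 (E →L[𝕜] E)).injective (by simpa using hTi.eq)
  rcases IsIdempotentElem.iff_eq_zero_or_one.1 hc with rfl | rfl <;> simp

end ContinuousLinearMap

theorem OrderIso.exists_apply_singleton_eq_singleton {α β : Type*} (τ : Set α ≃o Set β) (a : α) :
    ∃ b, τ {a} = {b} :=
  Set.isAtom_iff.1 ((τ.isAtom_iff _).2 (Set.isAtom_singleton a))

theorem OrderIso.exists_equiv_apply_singleton {α β : Type*} (τ : Set α ≃o Set β) :
    ∃ e : α ≃ β, ∀ a, τ {a} = {e a} := by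
  choose f hf using τ.exists_apply_singleton_eq_singleton
  choose g hg using τ.symm.exists_apply_singleton_eq_singleton
  refine ⟨⟨f, g, fun a => ?_, fun b => ?_⟩, hf⟩
  · simpa [hf, hg, eq_comm] using τ.symm_apply_apply {a}
  · simpa [hf, hg, eq_comm] using τ.apply_symm_apply {b}

namespace lp

variable {ι A : Type*} [NormedRing A]

local notation "𝓛" => lp (fun _ : ι => A) ∞

variable (A) in
noncomputable def indicator (S : Set ι) : 𝓛 :=
  ⟨S.indicator 1, memℓp_infty ⟨‖(1 : A)‖, by
    rintro - ⟨i, rfl⟩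
    by_cases hi : i ∈ S <;> simp [hi]⟩⟩

@[simp]
theorem coeFn_indicator (S : Set ι) : ⇑(indicator A S) = S.indicator 1 := rfl

theorem indicator_mul_indicator (S T : Set ι) :
    indicator A S * indicator A T = indicator A (S ∩ T) :=
  ext <| by rw [infty_coeFn_mul, coeFn_indicator, coeFn_indicator, coeFn_indicator,
    Set.inter_indicator_one]

theorem isIdempotentElem_indicator (S : Set ι) : IsIdempotentElem (indicator A S) := by
  rw [IsIdempotentElem, indicator_mul_indicator, Set.inter_self]

theorem indicator_mem_center (S : Set ι) : indicator A S ∈ Set.center 𝓛 :=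
  Semigroup.mem_center_iff.2 fun x => ext <| funext fun i => by
    by_cases hi : i ∈ S <;> simp [infty_coeFn_mul, hi]

theorem indicator_injective [Nontrivial A] : Function.Injective (indicator A (ι := ι)) :=
  fun _ _ h => Set.indicator_one_inj A congr(⇑$h)

theorem single_mul [DecidableEq ι] (j : ι) (a b : A) :
    (lp.single ∞ j (a * b) : 𝓛) = lp.single ∞ j a * lp.single ∞ j b :=
  ext <| by rw [infty_coeFn_mul, lp.coeFn_single, lp.coeFn_single, lp.coeFn_single, Pi.single_mul]

theorem mul_indicator_singleton [DecidableEq ι] (x : 𝓛) (j : ι) :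
    x * indicator A {j} = lp.single ∞ j (x j) :=
  ext <| funext fun i => by
    by_cases hi : i = j
    · subst hi; simp [infty_coeFn_mul]
    · simp [infty_coeFn_mul, hi]

theorem exists_eq_indicator_of_mem_center
    (hA : ∀ a ∈ Set.center A, IsIdempotentElem a → a = 0 ∨ a = 1) {x : 𝓛}
    (hx : x ∈ Set.center 𝓛) (hxi : IsIdempotentElem x) : ∃ S, x = indicator A S := by
  classical
  have hcoord : ∀ i, x i = 0 ∨ x i = 1 := fun i => by
    refine hA _ (Semigroup.mem_center_iff.2 fun a => ?_) congr(⇑$hxi i)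
    simpa [infty_coeFn_mul] using congr(⇑$(Semigroup.mem_center_iff.1 hx (lp.single ∞ i a)) i)
  refine ⟨{i | x i = 1}, ext <| funext fun i => ?_⟩
  rcases hcoord i with hi | hi <;> simp [Set.indicator_apply, hi]

section MulEquiv

variable (Φ : lp (fun _ : ι => A) ∞ ≃* lp (fun _ : ι => A) ∞)

theorem exists_apply_indicator_eq_indicator
    (hA : ∀ a ∈ Set.center A, IsIdempotentElem a → a = 0 ∨ a = 1) (S : Set ι) :
    ∃ T : Set ι, Φ (indicator A S) = indicator A T :=
  exists_eq_indicator_of_mem_center hA (MulEquivClass.apply_mem_center Φ (indicator_mem_center S))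
    ((isIdempotentElem_indicator S).map Φ)

noncomputable def indicatorOrderIso [Nontrivial A]
    (hA : ∀ a ∈ Set.center A, IsIdempotentElem a → a = 0 ∨ a = 1) : Set ι ≃o Set ι where
  toFun S := (exists_apply_indicator_eq_indicator Φ hA S).choose
  invFun S := (exists_apply_indicator_eq_indicator Φ.symm hA S).choose
  left_inv S := indicator_injective <| by
    rw [← (exists_apply_indicator_eq_indicator Φ.symm hA _).choose_spec,
      ← (exists_apply_indicator_eq_indicator Φ hA _).choose_spec, MulEquiv.symm_apply_apply]
  right_inv S := indicator_injective <| by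
    rw [← (exists_apply_indicator_eq_indicator Φ hA _).choose_spec,
      ← (exists_apply_indicator_eq_indicator Φ.symm hA _).choose_spec, MulEquiv.apply_symm_apply]
  map_rel_iff' {S T} := by
    simp only [Equiv.coe_fn_mk, ← Set.inter_eq_left,
      ← (indicator_injective (A := A)).eq_iff, ← indicator_mul_indicator,
      ← (exists_apply_indicator_eq_indicator Φ hA _).choose_spec, ← map_mul, Φ.injective.eq_iff]

theorem apply_indicator [Nontrivial A]
    (hA : ∀ a ∈ Set.center A, IsIdempotentElem a → a = 0 ∨ a = 1) (S : Set ι) :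
    Φ (indicator A S) = indicator A (indicatorOrderIso Φ hA S) :=
  (exists_apply_indicator_eq_indicator Φ hA S).choose_spec

variable [DecidableEq ι] {Φ} {j n : ι}

theorem apply_single_apply_eq_single (hjn : Φ (indicator A {j}) = indicator A {n}) (x : 𝓛) :
    Φ (lp.single ∞ j (x j)) = lp.single ∞ n (Φ x n) := by
  rw [← mul_indicator_singleton, map_mul, hjn, mul_indicator_singleton]

theorem apply_apply_eq_apply_single (hjn : Φ (indicator A {j}) = indicator A {n}) (x : 𝓛) :
    Φ x n = Φ (lp.single ∞ j (x j)) n := by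
  rw [apply_single_apply_eq_single hjn, lp.single_apply_self]

theorem bijective_apply_single_apply (hjn : Φ (indicator A {j}) = indicator A {n}) :
    Function.Bijective fun a : A => Φ (lp.single ∞ j a) n := by
  have hsingle (a : A) : Φ (lp.single ∞ j a) = lp.single ∞ n (Φ (lp.single ∞ j a) n) := by
    simpa using apply_single_apply_eq_single hjn (lp.single ∞ j a)
  refine ⟨fun a b hab => ?_, fun b => ⟨Φ.symm (lp.single ∞ n b) j, ?_⟩⟩
  · have h := (hsingle a).trans ((congrArg (lp.single ∞ n) hab).trans (hsingle b).symm)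
    simpa using congr($(Φ.injective h) j)
  · simp [← apply_apply_eq_apply_single hjn]

end MulEquiv

end lp

theorem automorphism_of_linfty_form_general
    {H : Type*} [NormedAddCommGroup H] [InnerProductSpace ℂ H] [Nontrivial H]
    (Φ : lp (fun _ : ℕ => H →L[ℂ] H) ∞ →ₗ[ℂ] lp (fun _ : ℕ => H →L[ℂ] H) ∞)
    (hbij : Function.Bijective Φ)
    (hmul : ∀ x y, Φ (x * y) = Φ x * Φ y) :
    ∃ (ψ : ℕ → ((H →L[ℂ] H) →ₗ[ℂ] (H →L[ℂ] H))) (e : ℕ ≃ ℕ),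
      (∀ n, Function.Bijective (ψ n) ∧ ∀ A B : H →L[ℂ] H, ψ n (A * B) = ψ n A * ψ n B) ∧
      ∀ (x : lp (fun _ : ℕ => H →L[ℂ] H) ∞) (n : ℕ),
        (Φ x : ∀ _ : ℕ, H →L[ℂ] H) n = ψ n ((x : ∀ _ : ℕ, H →L[ℂ] H) (e n)) := by
  let Ψ : lp (fun _ : ℕ => H →L[ℂ] H) ∞ ≃* lp (fun _ : ℕ => H →L[ℂ] H) ∞ :=
    { Equiv.ofBijective Φ hbij with map_mul' := hmul }
  have hcenter : ∀ T ∈ Set.center (H →L[ℂ] H), IsIdempotentElem T → T = 0 ∨ T = 1 :=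
    fun _ => ContinuousLinearMap.eq_zero_or_eq_one_of_mem_center
  obtain ⟨σ, hσ⟩ := (lp.indicatorOrderIso Ψ hcenter).exists_equiv_apply_singleton
  have hΨ (n : ℕ) : Ψ (lp.indicator _ {σ.symm n}) = lp.indicator _ {n} := by
    rw [lp.apply_indicator Ψ hcenter, hσ, σ.apply_symm_apply]
  let ψ (n : ℕ) : (H →L[ℂ] H) →ₗ[ℂ] (H →L[ℂ] H) :=
    lp.evalₗ _ ∞ n ∘ₗ Φ ∘ₗ lp.lsingle (E := fun _ : ℕ => H →L[ℂ] H) ∞ (σ.symm n)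
  refine ⟨ψ, σ.symm,
    fun n => ⟨lp.bijective_apply_single_apply (hΨ n), fun A B => ?_⟩,
    fun x n => lp.apply_apply_eq_apply_single (hΨ n) x⟩
  simp only [ψ, LinearMap.comp_apply, lp.lsingle_apply, lp.evalₗ_apply]
  rw [lp.single_mul, hmul, lp.infty_coeFn_mul, Pi.mul_apply]

/-- Let `H` be a complex separable infinite-dimensional Hilbert space and let
`Φ : ℓ∞(ℕ, B(H)) → ℓ∞(ℕ, B(H))` be an algebra automorphism (a bijective multiplicative
complex-linear map). Then there are algebra automorphisms `φ_n` of `B(H)` (`n ∈ ℕ`) and a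
bijection `φ : ℕ → ℕ` such that `Φ((A_k)_k) = (φ_n(A_{φ(n)}))_n`. -/
theorem automorphism_of_linfty_form
    {H : Type*} [NormedAddCommGroup H] [InnerProductSpace ℂ H] [CompleteSpace H]
    [TopologicalSpace.SeparableSpace H] [Nontrivial H]
    (hinf : ¬ FiniteDimensional ℂ H)
    (Φ : lp (fun _ : ℕ => H →L[ℂ] H) ∞ →ₗ[ℂ] lp (fun _ : ℕ => H →L[ℂ] H) ∞)
    (hbij : Function.Bijective Φ)
    (hmul : ∀ x y, Φ (x * y) = Φ x * Φ y) :
    ∃ (ψ : ℕ → ((H →L[ℂ] H) →ₗ[ℂ] (H →L[ℂ] H))) (e : ℕ ≃ ℕ),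
      (∀ n, Function.Bijective (ψ n) ∧ ∀ A B : H →L[ℂ] H, ψ n (A * B) = ψ n A * ψ n B) ∧
      ∀ (x : lp (fun _ : ℕ => H →L[ℂ] H) ∞) (n : ℕ),
        (Φ x : ∀ _ : ℕ, H →L[ℂ] H) n = ψ n ((x : ∀ _ : ℕ, H →L[ℂ] H) (e n)) :=
  automorphism_of_linfty_form_general Φ hbij hmul
end

section
/- There exists an uncountable family (P_i)_{i∈I} of idempotent operators in B(H) such that no P_i is a compact operator and, for all i ≠ j, both products P_iP_j and P_jP_i are compact operators. (Equivalently: the Calkin algebra B(H)/K(H) has uncountably many pairwise orthogonal nonzero idempotents.) -/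
/-!
Let `(e_w)` be an orthonormal family indexed by finite binary words and, for a set `S` of words,
let `P_S` be the orthogonal projection onto the closed span of `{e_w | w ∈ S}`. A compact operator
fixing a closed subspace forces that subspace to be finite dimensional, so `P_S` is compact only
when `S` is finite; and `P_S P_T` takes values in the closed span of `S ∩ T`, so it is compact as
soon as `S ∩ T` is finite. The sets of finite prefixes of the uncountably many infinite binary
sequences are infinite and pairwise almost disjoint, which gives the required family.
-/

open Submodule

section CompactOperator

variable {𝕜 E F : Type*} [NontriviallyNormedField 𝕜]
  [NormedAddCommGroup E] [NormedSpace 𝕜 E] [NormedAddCommGroup F] [NormedSpace 𝕜 F]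

theorem ContinuousLinearMap.isCompactOperator_of_forall_mem [ProperSpace 𝕜] (T : E →L[𝕜] F)
    {V : Submodule 𝕜 F} [FiniteDimensional 𝕜 V] (hT : ∀ x, T x ∈ V) : IsCompactOperator T :=
  have := FiniteDimensional.proper 𝕜 V
  (isCompactOperator_of_locallyCompactSpace_dom (T.codRestrict V hT)).clm_comp V.subtypeL

theorem IsCompactOperator.finiteDimensional_of_forall_apply_eq_self [CompleteSpace 𝕜]
    {T : E →L[𝕜] E} (hT : IsCompactOperator T) {V : Submodule 𝕜 E} (hV : IsClosed (V : Set E))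
    (hfix : ∀ v ∈ V, T v = v) : FiniteDimensional 𝕜 V := by
  have hmaps : ∀ v ∈ V, T v ∈ V := fun v hv ↦ (hfix v hv).symm ▸ hv
  have hid : ⇑((T : E →ₗ[𝕜] E).restrict hmaps) = id := funext fun v ↦ Subtype.ext (hfix v v.2)
  exact .of_isCompactOperator_id (hid ▸ hT.restrict hmaps hV)

end CompactOperator

section ClosedSpan

variable {𝕜 E ι : Type*} [RCLike 𝕜] [NormedAddCommGroup E] [InnerProductSpace 𝕜 E]
  {e : ι → E} {S T : Set ι} {i : ι}

variable (𝕜) in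
abbrev closedSpan (e : ι → E) (S : Set ι) : Submodule 𝕜 E :=
  (span 𝕜 (e '' S)).topologicalClosure

theorem isClosed_closedSpan : IsClosed (closedSpan 𝕜 e S : Set E) :=
  isClosed_topologicalClosure _

theorem mem_closedSpan (hi : i ∈ S) : e i ∈ closedSpan 𝕜 e S :=
  le_topologicalClosure _ (subset_span ⟨i, hi, rfl⟩)

theorem finiteDimensional_closedSpan (hS : S.Finite) :
    FiniteDimensional 𝕜 (closedSpan 𝕜 e S) := by
  have := FiniteDimensional.span_of_finite 𝕜 (hS.image e)
  rwa [closedSpan, (span 𝕜 (e '' S)).closed_of_finiteDimensional.submodule_topologicalClosure_eq]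

namespace Orthonormal

theorem mem_orthogonal_closedSpan (he : Orthonormal 𝕜 e) (hi : i ∉ S) :
    e i ∈ (closedSpan 𝕜 e S)ᗮ := by
  rw [closedSpan, orthogonal_closure]
  refine (isOrtho_span.2 ?_).ge (subset_span (Set.mem_singleton (e i)))
  rintro _ ⟨j, hj, rfl⟩ _ rfl
  exact he.2 fun hji ↦ hi (hji ▸ hj)

variable [CompleteSpace E]

theorem starProjection_closedSpan_mem_inter (he : Orthonormal 𝕜 e) {x : E}
    (hx : x ∈ closedSpan 𝕜 e T) :
    (closedSpan 𝕜 e S).starProjection x ∈ closedSpan 𝕜 e (S ∩ T) := by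
  let P : E →ₗ[𝕜] E := (closedSpan 𝕜 e S).starProjection
  suffices closedSpan 𝕜 e T ≤ (closedSpan 𝕜 e (S ∩ T)).comap P from this hx
  refine topologicalClosure_minimal _ (span_le.2 ?_)
    (isClosed_closedSpan.preimage (closedSpan 𝕜 e S).starProjection.continuous)
  rintro _ ⟨j, hjT, rfl⟩
  by_cases hjS : j ∈ S
  · have hPe : P (e j) = e j := starProjection_eq_self_iff.2 (mem_closedSpan hjS)
    rw [SetLike.mem_coe, mem_comap, hPe]
    exact mem_closedSpan ⟨hjS, hjT⟩
  · have hPe : P (e j) = 0 :=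
      (starProjection_apply_eq_zero_iff _).2 (he.mem_orthogonal_closedSpan hjS)
    rw [SetLike.mem_coe, mem_comap, hPe]
    exact zero_mem _

theorem isCompactOperator_starProjection_mul (he : Orthonormal 𝕜 e) (hST : (S ∩ T).Finite) :
    IsCompactOperator ⇑((closedSpan 𝕜 e S).starProjection * (closedSpan 𝕜 e T).starProjection) :=
  have := finiteDimensional_closedSpan (e := e) (𝕜 := 𝕜) hST
  ContinuousLinearMap.isCompactOperator_of_forall_mem _ fun x ↦
    he.starProjection_closedSpan_mem_inter (starProjection_apply_mem _ x)

theorem not_isCompactOperator_starProjection (he : Orthonormal 𝕜 e) (hS : S.Infinite) :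
    ¬ IsCompactOperator (closedSpan 𝕜 e S).starProjection := by
  intro hcompact
  have := hcompact.finiteDimensional_of_forall_apply_eq_self isClosed_closedSpan
    fun v hv ↦ starProjection_eq_self_iff.2 hv
  have := hS.to_subtype
  refine Module.Finite.not_linearIndependent_of_infinite (R := 𝕜)
    (fun i : S ↦ (⟨e i, mem_closedSpan i.2⟩ : closedSpan 𝕜 e S)) ?_
  exact .of_comp (closedSpan 𝕜 e S).subtype (he.linearIndependent.comp _ Subtype.val_injective)

end Orthonormal

theorem exists_orthonormal_of_countable [CompleteSpace E] (α : Type*) [Countable α]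
    (hE : ¬ FiniteDimensional 𝕜 E) : ∃ e : α → E, Orthonormal 𝕜 e := by
  obtain ⟨w, b, -⟩ := exists_hilbertBasis 𝕜 E
  have : Infinite w := by
    by_contra hfin
    have := not_infinite_iff_finite.1 hfin
    have := Fintype.ofFinite w
    exact hE b.toOrthonormalBasis.toBasis.finiteDimensional_of_finite
  obtain ⟨f, hf⟩ := exists_injective_nat α
  exact ⟨b ∘ Infinite.natEmbedding w ∘ f,
    b.orthonormal.comp _ ((Infinite.natEmbedding w).injective.comp hf)⟩

end ClosedSpan

def prefixes (f : ℕ → Bool) : Set (List Bool) :=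
  Set.range fun n ↦ List.ofFn fun i : Fin n ↦ f i

theorem infinite_prefixes (f : ℕ → Bool) : (prefixes f).Infinite :=
  Set.infinite_range_of_injective fun n m h ↦ by simpa using congrArg List.length h

theorem finite_prefixes_inter {f g : ℕ → Bool} (hfg : f ≠ g) :
    (prefixes f ∩ prefixes g).Finite := by
  obtain ⟨k, hk⟩ := Function.ne_iff.1 hfg
  refine ((Set.finite_Iic k).image fun n ↦ List.ofFn fun i : Fin n ↦ f i).subset ?_
  rintro _ ⟨⟨n, rfl⟩, ⟨m, hm⟩⟩
  obtain rfl : m = n := by simpa using congrArg List.length hm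
  refine ⟨m, Set.mem_Iic.2 (not_lt.1 fun hkm ↦ hk ?_), rfl⟩
  exact (congrFun (List.ofFn_inj.1 hm) ⟨k, hkm⟩).symm

theorem exists_uncountable_essentially_orthogonal_idempotents_general
    {H : Type*} [NormedAddCommGroup H] [InnerProductSpace ℂ H] [CompleteSpace H]
    (hinf : ¬ FiniteDimensional ℂ H) :
    ∃ (ι : Type) (P : ι → (H →L[ℂ] H)), ¬ Countable ι ∧
      (∀ i, P i * P i = P i) ∧
      (∀ i, ¬ IsCompactOperator (P i)) ∧
      (∀ i j, i ≠ j → IsCompactOperator ⇑(P i * P j) ∧ IsCompactOperator ⇑(P j * P i)) := by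
  obtain ⟨e, he⟩ := exists_orthonormal_of_countable (List Bool) hinf
  refine ⟨ℕ → Bool, fun f ↦ (closedSpan ℂ e (prefixes f)).starProjection, ?_,
    fun f ↦ (isIdempotentElem_starProjection _).eq,
    fun f ↦ he.not_isCompactOperator_starProjection (infinite_prefixes f),
    fun f g hfg ↦ ⟨he.isCompactOperator_starProjection_mul (finite_prefixes_inter hfg),
      he.isCompactOperator_starProjection_mul (finite_prefixes_inter hfg.symm)⟩⟩
  rw [← Cardinal.mk_le_aleph0_iff, not_le]
  simpa using Cardinal.cantor Cardinal.aleph0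

/-- Let `H` be a complex separable infinite-dimensional Hilbert space. There
exists an uncountable family `(P_i)` of idempotent operators in `B(H)` such that no `P_i` is
compact and, for `i ≠ j`, both `P_iP_j` and `P_jP_i` are compact (i.e. the Calkin algebra has
uncountably many pairwise orthogonal nonzero idempotents). -/
theorem exists_uncountable_essentially_orthogonal_idempotents
    {H : Type*} [NormedAddCommGroup H] [InnerProductSpace ℂ H] [CompleteSpace H]
    [TopologicalSpace.SeparableSpace H] (hinf : ¬ FiniteDimensional ℂ H) :
    ∃ (ι : Type) (P : ι → (H →L[ℂ] H)), ¬ Countable ι ∧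
      (∀ i, P i * P i = P i) ∧
      (∀ i, ¬ IsCompactOperator (P i)) ∧
      (∀ i j, i ≠ j → IsCompactOperator ⇑(P i * P j) ∧ IsCompactOperator ⇑(P j * P i)) :=
  exists_uncountable_essentially_orthogonal_idempotents_general hinf
end

section
/- A function f ∈ C(βℕ, B(H)) is a nonzero minimal idempotent if and only if there exist n ∈ ℕ and a rank-one idempotent P ∈ B(H) such that f takes the value P at the point of βℕ corresponding to n and the value 0 at every other point of βℕ. -/
/-! Points of `ℕ` are isolated and dense in `βℕ`. So a nonzero minimal idempotent `f` is
nonzero at some `n`, and the function equal to `f n` at `n` and to `0` elsewhere is a continuous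
nonzero idempotent below `f`, hence is `f`. Idempotents below such a one-point function are
one-point functions again, so `f` is minimal iff `f n` is minimal in `B(H)`. There, a nonzero
idempotent `P` dominates the rank-one idempotent `z ↦ φ (P z) • x`, where `x = P y ≠ 0` and
`φ x = 1`; and a nonzero idempotent below a rank-one idempotent has the same range, hence
equals it. -/

open Set Module

def IsMinimalIdempotent {R : Type*} [Mul R] [Zero R] (e : R) : Prop :=
  IsIdempotentElem e ∧ e ≠ 0 ∧
    ∀ g, IsIdempotentElem g → e * g = g → g * e = g → g = 0 ∨ g = e

lemma isClopen_singleton_stoneCechUnit {α : Type*} [TopologicalSpace α] [DiscreteTopology α]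
    (a : α) :
    IsClopen ({stoneCechUnit a} : Set (StoneCech α)) := by
  classical
  have hχ : Continuous fun b : α => decide (b = a) := continuous_of_discreteTopology
  set U := stoneCechExtend hχ ⁻¹' {true}
  have hU : IsClopen U := (isClopen_discrete _).preimage (continuous_stoneCechExtend hχ)
  have hUa : U ∩ range stoneCechUnit = {stoneCechUnit a} := by
    ext t
    constructor
    · rintro ⟨ht, b, rfl⟩
      simp_all [U, stoneCechExtend_stoneCechUnit]
    · rintro rfl
      simp [U, stoneCechExtend_stoneCechUnit]
  have hUeq : U = {stoneCechUnit a} := by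
    refine subset_antisymm ?_ (hUa ▸ inter_subset_left)
    simpa [hUa] using denseRange_stoneCechUnit.open_subset_closure_inter hU.isOpen
  exact hUeq ▸ hU

namespace ContinuousLinearMap

section DivisionRing

variable {K E : Type*} [DivisionRing K] [AddCommGroup E] [TopologicalSpace E] [Module K E]
  {P : E →L[K] E}

lemma ne_zero_of_finrank_range_eq_one
    (hrank : finrank K (LinearMap.range (P : E →ₗ[K] E)) = 1) : P ≠ 0 := by
  rintro rfl
  rw [toLinearMap_zero, LinearMap.range_zero, finrank_bot] at hrank
  exact zero_ne_one hrank

lemma isMinimalIdempotent_of_finrank_range_eq_one (hP : IsIdempotentElem P)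
    (hrank : finrank K (LinearMap.range (P : E →ₗ[K] E)) = 1) : IsMinimalIdempotent P := by
  refine ⟨hP, ne_zero_of_finrank_range_eq_one hrank, fun Q hQ hPQ hQP => ?_⟩
  refine or_iff_not_imp_left.2 fun hQ0 => ?_
  have : FiniteDimensional K (LinearMap.range (P : E →ₗ[K] E)) :=
    .of_finrank_pos (by rw [hrank]; exact one_pos)
  have hle : LinearMap.range (Q : E →ₗ[K] E) ≤ LinearMap.range (P : E →ₗ[K] E) :=
    hPQ ▸ LinearMap.range_comp_le_range _ _
  have : FiniteDimensional K (LinearMap.range (Q : E →ₗ[K] E)) :=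
    Submodule.finiteDimensional_of_le hle
  have hQrange : LinearMap.range (Q : E →ₗ[K] E) ≠ ⊥ := by
    rwa [Ne, LinearMap.range_eq_bot, ← toLinearMap_zero, coe_inj]
  have hrange := Submodule.eq_of_le_of_finrank_le hle
    (hrank ▸ Submodule.one_le_finrank_iff.2 hQrange)
  have hQP' : Q * P = P := by
    have := (LinearMap.IsIdempotentElem.comp_eq_right_iff (IsIdempotentElem.toLinearMap hQ)
      (P : E →ₗ[K] E)).2 hrange.ge
    exact_mod_cast this
  rw [← hQP, hQP']

end DivisionRing

section Field

variable {K E : Type*} [Field K] [TopologicalSpace K] [IsTopologicalRing K]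
  [AddCommGroup E] [TopologicalSpace E] [Module K E] [ContinuousSMul K E]
  [SeparatingDual K E] {P : E →L[K] E}

lemma exists_finrank_range_eq_one_le (hP : IsIdempotentElem P) (hP0 : P ≠ 0) :
    ∃ Q : E →L[K] E, IsIdempotentElem Q ∧ P * Q = Q ∧ Q * P = Q ∧
      finrank K (LinearMap.range (Q : E →ₗ[K] E)) = 1 := by
  obtain ⟨y, hy⟩ := DFunLike.ne_iff.1 hP0
  set x := P y
  have hPx : P x = x := DFunLike.congr_fun hP.eq y
  obtain ⟨φ, hφ⟩ := SeparatingDual.exists_eq_one (R := K) hy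
  have hφP : φ.comp P ≠ 0 := DFunLike.ne_iff.2 ⟨x, by simp [hPx, hφ]⟩
  refine ⟨(φ.comp P).smulRight x, ?_, ?_, ?_, ?_⟩
  · ext z; simp [hPx, hφ]
  · ext z; simp [hPx]
  · ext z; simp [← mul_apply_eq_comp P P, hP.eq]
  · rw [range_smulRight_apply hφP, finrank_span_singleton hy]

lemma isMinimalIdempotent_iff :
    IsMinimalIdempotent P ↔
      IsIdempotentElem P ∧ finrank K (LinearMap.range (P : E →ₗ[K] E)) = 1 := by
  refine ⟨fun ⟨hP, hP0, hmin⟩ => ?_,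
    fun h => isMinimalIdempotent_of_finrank_range_eq_one h.1 h.2⟩
  obtain ⟨Q, hQ, hPQ, hQP, hrank⟩ := exists_finrank_range_eq_one_le hP hP0
  obtain rfl | rfl := hmin Q hQ hPQ hQP
  · exact absurd rfl (ne_zero_of_finrank_range_eq_one hrank)
  · exact ⟨hP, hrank⟩

end Field

end ContinuousLinearMap

namespace ContinuousMap

section Single

variable {X A : Type*} [TopologicalSpace X] [TopologicalSpace A] {x₀ : X}

section Zero

variable [Zero A]

noncomputable def single (h : IsClopen ({x₀} : Set X)) (a : A) : C(X, A) where
  toFun := ({x₀} : Set X).indicator fun _ => a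
  continuous_toFun := continuous_const.indicator (by simp [h.frontier_eq])

variable (h : IsClopen ({x₀} : Set X))

@[simp]
lemma single_apply_self (a : A) : single h a x₀ = a := by
  simp [single]

lemma single_apply_of_ne (a : A) {x : X} (hx : x ≠ x₀) : single h a x = 0 := by
  simp [single, hx]

lemma eq_single_iff {f : C(X, A)} {a : A} :
    f = single h a ↔ f x₀ = a ∧ ∀ x ≠ x₀, f x = 0 := by
  refine ⟨?_, fun ⟨h₀, h₁⟩ => ext fun x => ?_⟩
  · rintro rfl
    exact ⟨single_apply_self h a, fun x hx => single_apply_of_ne h a hx⟩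
  · rcases eq_or_ne x x₀ with rfl | hx
    · rw [h₀, single_apply_self]
    · rw [h₁ x hx, single_apply_of_ne h a hx]

lemma single_inj {a b : A} : single h a = single h b ↔ a = b :=
  ⟨fun hab => by rw [← single_apply_self h a, hab, single_apply_self], congrArg _⟩

@[simp]
lemma single_zero : single h (0 : A) = 0 :=
  ((eq_single_iff h (f := 0)).2 ⟨rfl, fun _ _ => rfl⟩).symm

end Zero

variable [MulZeroClass A] [ContinuousMul A] (h : IsClopen ({x₀} : Set X))

lemma single_mul (a : A) (f : C(X, A)) : single h a * f = single h (a * f x₀) := by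
  refine (eq_single_iff h).2 ⟨by simp, fun x hx => ?_⟩
  simp [single_apply_of_ne h a hx]

lemma mul_single (f : C(X, A)) (a : A) : f * single h a = single h (f x₀ * a) := by
  refine (eq_single_iff h).2 ⟨by simp, fun x hx => ?_⟩
  simp [single_apply_of_ne h a hx]

lemma single_mul_single (a b : A) : single h a * single h b = single h (a * b) := by
  rw [single_mul, single_apply_self]

lemma eq_single_of_single_mul_eq {a : A} {g : C(X, A)} (hg : single h a * g = g) :
    g = single h (g x₀) := by
  rw [single_mul, eq_comm, eq_single_iff] at hg
  exact (eq_single_iff h).2 ⟨rfl, hg.2⟩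

lemma isMinimalIdempotent_single_iff {a : A} :
    IsMinimalIdempotent (single h a) ↔ IsMinimalIdempotent a := by
  simp only [IsMinimalIdempotent, IsIdempotentElem, single_mul_single, single_inj, Ne,
    ← single_zero h]
  refine and_congr_right fun _ => and_congr_right fun _ => ⟨fun hmin b hb hab hba => ?_, ?_⟩
  · simpa only [single_inj] using hmin (single h b) (by rw [single_mul_single, hb])
      (by rw [single_mul_single, hab]) (by rw [single_mul_single, hba])
  · intro hmin g hg hag hga
    obtain ⟨b, rfl⟩ : ∃ b, g = single h b := ⟨_, eq_single_of_single_mul_eq h hag⟩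
    simp only [single_mul_single, single_inj] at hg hag hga ⊢
    exact hmin _ hg hag hga

lemma eq_single_of_isMinimalIdempotent {f : C(X, A)} (hf : IsMinimalIdempotent f)
    (hx₀ : f x₀ ≠ 0) : f = single h (f x₀) := by
  obtain ⟨hff, -, hmin⟩ := hf
  have hf₀ : f x₀ * f x₀ = f x₀ := DFunLike.congr_fun hff x₀
  refine ((hmin (single h (f x₀)) ?_ ?_ ?_).resolve_left fun h0 => hx₀ ?_).symm
  · rw [IsIdempotentElem, single_mul_single, hf₀]
  · rw [mul_single, hf₀]
  · rw [single_mul, hf₀]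
  · rw [← single_apply_self h (f x₀), h0, zero_apply]

end Single

variable {α A : Type*} [TopologicalSpace α] [TopologicalSpace A]

lemma exists_apply_stoneCechUnit_ne_zero [Zero A] [T1Space A] {f : C(StoneCech α, A)}
    (hf : f ≠ 0) : ∃ a, f (stoneCechUnit a) ≠ 0 := by
  obtain ⟨t, ht⟩ := DFunLike.ne_iff.1 hf
  exact denseRange_stoneCechUnit.exists_mem_open (isOpen_compl_singleton.preimage f.continuous)
    ⟨t, ht⟩

lemma isMinimalIdempotent_iff_exists_eq_single [DiscreteTopology α] [MulZeroClass A]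
    [ContinuousMul A] [T1Space A] (f : C(StoneCech α, A)) :
    IsMinimalIdempotent f ↔
      ∃ a P, IsMinimalIdempotent P ∧ f = single (isClopen_singleton_stoneCechUnit a) P := by
  refine ⟨fun hf => ?_, ?_⟩
  · obtain ⟨a, ha⟩ := exists_apply_stoneCechUnit_ne_zero hf.2.1
    have hfa := eq_single_of_isMinimalIdempotent (isClopen_singleton_stoneCechUnit a) hf ha
    refine ⟨a, _, ?_, hfa⟩
    rwa [hfa, isMinimalIdempotent_single_iff] at hf
  · rintro ⟨a, P, hP, rfl⟩
    exact (isMinimalIdempotent_single_iff _).2 hP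

end ContinuousMap

theorem minimal_idempotent_in_continuous_stoneCech_iff_general
    {H : Type*} [NormedAddCommGroup H] [InnerProductSpace ℂ H]
    (f : C(StoneCech ℕ, H →L[ℂ] H)) :
    (f * f = f ∧ f ≠ 0 ∧
      ∀ g : C(StoneCech ℕ, H →L[ℂ] H), g * g = g → f * g = g → g * f = g → g = 0 ∨ g = f) ↔
    ∃ (n : ℕ) (P : H →L[ℂ] H),
      P * P = P ∧ Module.finrank ℂ (LinearMap.range (P : H →ₗ[ℂ] H)) = 1 ∧
      f (stoneCechUnit n) = P ∧ ∀ t : StoneCech ℕ, t ≠ stoneCechUnit n → f t = 0 := by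
  change IsMinimalIdempotent f ↔ _
  simp only [ContinuousMap.isMinimalIdempotent_iff_exists_eq_single,
    ContinuousLinearMap.isMinimalIdempotent_iff, ContinuousMap.eq_single_iff, IsIdempotentElem,
    and_assoc]

/-- Let `H` be a complex separable infinite-dimensional Hilbert space. A
function `f ∈ C(βℕ, B(H))` is a nonzero minimal idempotent if and only if there exist `n ∈ ℕ`
and a rank-one idempotent `P ∈ B(H)` such that `f` takes the value `P` at the point of `βℕ`
corresponding to `n` and the value `0` at every other point of `βℕ`. -/
theorem minimal_idempotent_in_continuous_stoneCech_iff
    {H : Type*} [NormedAddCommGroup H] [InnerProductSpace ℂ H] [CompleteSpace H]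
    [TopologicalSpace.SeparableSpace H] (hinf : ¬ FiniteDimensional ℂ H)
    (f : C(StoneCech ℕ, H →L[ℂ] H)) :
    (f * f = f ∧ f ≠ 0 ∧
      ∀ g : C(StoneCech ℕ, H →L[ℂ] H), g * g = g → f * g = g → g * f = g → g = 0 ∨ g = f) ↔
    ∃ (n : ℕ) (P : H →L[ℂ] H),
      P * P = P ∧ Module.finrank ℂ (LinearMap.range (P : H →ₗ[ℂ] H)) = 1 ∧
      f (stoneCechUnit n) = P ∧ ∀ t : StoneCech ℕ, t ≠ stoneCechUnit n → f t = 0 :=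
  minimal_idempotent_in_continuous_stoneCech_iff_general f
end

section
/- Let φ : ℕ → ℕ be a bijection and for each m ∈ ℕ let T_m ∈ B(H) be an invertible operator. Suppose that the formula Φ((A_k)_k) = (T_m A_{φ(m)} T_m^{-1})_m defines a bounded complex-linear map Φ from ℓ∞(ℕ, B(H)) into itself. Then sup_m ‖T_m‖·‖T_m^{-1}‖ < ∞, and consequently Φ is a bijective algebra automorphism of ℓ∞(ℕ, B(H)). -/
set_option maxHeartbeats 1000000
set_option synthInstance.maxHeartbeats 400000


open scoped ENNReal

/-- Let `H` be a complex separable infinite-dimensional Hilbert space, let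
`φ : ℕ → ℕ` be a bijection and for each `m` let `T_m ∈ B(H)` be invertible with inverse
`S_m`. Suppose the formula `Φ((A_k)_k) = (T_m A_{φ(m)} T_m⁻¹)_m` defines a bounded
complex-linear map `Φ` on `ℓ∞(ℕ, B(H))`. Then `sup_m ‖T_m‖·‖T_m⁻¹‖ < ∞`, and consequently
`Φ` is a bijective algebra automorphism of `ℓ∞(ℕ, B(H))`. -/
theorem similarity_automorphism_of_linfty
    {H : Type*} [NormedAddCommGroup H] [InnerProductSpace ℂ H] [CompleteSpace H]
    [TopologicalSpace.SeparableSpace H] [Nontrivial H]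
    (hinf : ¬ FiniteDimensional ℂ H)
    (e : ℕ ≃ ℕ) (T S : ℕ → (H →L[ℂ] H))
    (hTS : ∀ m, T m * S m = 1 ∧ S m * T m = 1)
    (Φ : lp (fun _ : ℕ => H →L[ℂ] H) ∞ →L[ℂ] lp (fun _ : ℕ => H →L[ℂ] H) ∞)
    (hΦ : ∀ (x : lp (fun _ : ℕ => H →L[ℂ] H) ∞) (m : ℕ),
      (Φ x : ∀ _ : ℕ, H →L[ℂ] H) m = T m * (x : ∀ _ : ℕ, H →L[ℂ] H) (e m) * S m) :
    (∃ C : ℝ, ∀ m, ‖T m‖ * ‖S m‖ ≤ C) ∧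
    Function.Bijective Φ ∧
    ∀ x y : lp (fun _ : ℕ => H →L[ℂ] H) ∞, Φ (x * y) = Φ x * Φ y := by
  -- Step A: uniform bound on the similarity maps
  have key : ∀ (m : ℕ) (A : H →L[ℂ] H), ‖T m * A * S m‖ ≤ ‖Φ‖ * ‖A‖ := by
    intro m A
    have hmem : Memℓp (fun _ : ℕ => A) ∞ :=
      memℓp_infty ⟨‖A‖, by rintro - ⟨i, rfl⟩; exact le_rfl⟩
    set x : lp (fun _ : ℕ => H →L[ℂ] H) ∞ := ⟨fun _ => A, hmem⟩ with hxdef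
    have hx : ‖x‖ ≤ ‖A‖ := lp.norm_le_of_forall_le (norm_nonneg A) (fun i => le_rfl)
    have h1 : T m * A * S m = (Φ x : ∀ _ : ℕ, H →L[ℂ] H) m := (hΦ x m).symm
    calc ‖T m * A * S m‖ = ‖(Φ x : ∀ _ : ℕ, H →L[ℂ] H) m‖ := by rw [h1]
      _ ≤ ‖Φ x‖ := lp.norm_apply_le_norm ENNReal.top_ne_zero (Φ x) m
      _ ≤ ‖Φ‖ * ‖x‖ := Φ.le_opNorm x
      _ ≤ ‖Φ‖ * ‖A‖ := mul_le_mul_of_nonneg_left hx (ContinuousLinearMap.opNorm_nonneg Φ)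
  -- Step B: pointwise product bound via rank-one operators
  have hK0 : (0:ℝ) ≤ ‖Φ‖ := ContinuousLinearMap.opNorm_nonneg Φ
  have hSz : ∀ (m : ℕ) (u z : H), ‖T m u‖ * ‖S m z‖ ≤ ‖Φ‖ * ‖u‖ * ‖z‖ := by
    intro m u z
    rcases eq_or_ne (‖S m z‖) 0 with h0 | h0
    · rw [h0, mul_zero]
      positivity
    have hpos : 0 < ‖S m z‖ := lt_of_le_of_ne (norm_nonneg _) (Ne.symm h0)
    set A : H →L[ℂ] H := (innerSL ℂ (S m z)).smulRight u with hA
    have hAn : ‖A‖ ≤ ‖S m z‖ * ‖u‖ := by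
      rw [hA, ContinuousLinearMap.norm_smulRight_apply]
      rw [innerSL_apply_norm]
    have happ : (T m * A * S m) z = ((‖S m z‖ : ℂ)^2) • T m u := by
      show T m (A (S m z)) = _
      rw [hA]
      simp only [ContinuousLinearMap.smulRight_apply, innerSL_apply_apply]
      rw [inner_self_eq_norm_sq_to_K (𝕜 := ℂ)]
      rw [map_smul]
      norm_cast
    have hnorm : ‖(T m * A * S m) z‖ = ‖S m z‖^2 * ‖T m u‖ := by
      rw [happ, norm_smul]
      congr 1
      have : ((‖S m z‖ : ℂ)^2) = ((‖S m z‖^2 : ℝ) : ℂ) := by push_cast; ring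
      rw [this, Complex.norm_real]
      exact Real.norm_of_nonneg (by positivity)
    have hchain : ‖S m z‖^2 * ‖T m u‖ ≤ ‖Φ‖ * (‖S m z‖ * ‖u‖) * ‖z‖ := by
      rw [← hnorm]
      calc ‖(T m * A * S m) z‖ ≤ ‖T m * A * S m‖ * ‖z‖ := (T m * A * S m).le_opNorm z
        _ ≤ (‖Φ‖ * ‖A‖) * ‖z‖ := mul_le_mul_of_nonneg_right (key m A) (norm_nonneg z)
        _ ≤ ‖Φ‖ * (‖S m z‖ * ‖u‖) * ‖z‖ := by
            have : ‖Φ‖ * ‖A‖ ≤ ‖Φ‖ * (‖S m z‖ * ‖u‖) := mul_le_mul_of_nonneg_left hAn hK0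
            exact mul_le_mul_of_nonneg_right this (norm_nonneg z)
    nlinarith [norm_nonneg (T m u), norm_nonneg u, norm_nonneg z]
  have hbound : ∀ m, ‖T m‖ * ‖S m‖ ≤ ‖Φ‖ := by
    intro m
    have h1 : ∀ u : H, ‖T m u‖ * ‖S m‖ ≤ ‖Φ‖ * ‖u‖ := by
      intro u
      have : ‖(‖T m u‖ : ℝ) • S m‖ ≤ ‖Φ‖ * ‖u‖ := by
        apply ContinuousLinearMap.opNorm_le_bound _ (by positivity)
        intro z
        rw [ContinuousLinearMap.smul_apply, norm_smul, Real.norm_eq_abs,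
          abs_of_nonneg (norm_nonneg _)]
        exact hSz m u z
      rwa [norm_smul, Real.norm_eq_abs, abs_of_nonneg (norm_nonneg _)] at this
    have h2 : ‖(‖S m‖ : ℝ) • T m‖ ≤ ‖Φ‖ := by
      apply ContinuousLinearMap.opNorm_le_bound _ hK0
      intro u
      rw [ContinuousLinearMap.smul_apply, norm_smul, Real.norm_eq_abs,
        abs_of_nonneg (norm_nonneg _), mul_comm]
      exact h1 u
    rwa [norm_smul, Real.norm_eq_abs, abs_of_nonneg (norm_nonneg _), mul_comm] at h2
  refine ⟨⟨‖Φ‖, hbound⟩, ?_, ?_⟩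
  · constructor
    · -- injective
      intro x y hxy
      apply lp.ext
      funext k
      obtain ⟨m, rfl⟩ : ∃ m, e m = k := ⟨e.symm k, e.apply_symm_apply k⟩
      have h := congrArg (fun w : lp (fun _ : ℕ => H →L[ℂ] H) ∞ =>
        (w : ∀ _ : ℕ, H →L[ℂ] H) m) hxy
      simp only [hΦ] at h
      have cancel : ∀ a : H →L[ℂ] H, S m * (T m * a * S m) * T m = a := by
        intro a
        have h2 := (hTS m).2
        calc S m * (T m * a * S m) * T m = (S m * T m) * a * (S m * T m) := by noncomm_ring
          _ = a := by rw [h2, one_mul, mul_one]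
      have := congrArg (fun b => S m * b * T m) h
      simpa only [cancel] using this
    · -- surjective
      intro y
      have hmem : Memℓp (fun k : ℕ =>
          S (e.symm k) * (y : ∀ _ : ℕ, H →L[ℂ] H) (e.symm k) * T (e.symm k)) ∞ := by
        apply memℓp_infty
        refine ⟨‖Φ‖ * ‖y‖, ?_⟩
        rintro - ⟨k, rfl⟩
        set j := e.symm k
        calc ‖S j * (y : ∀ _ : ℕ, H →L[ℂ] H) j * T j‖
            ≤ ‖S j * (y : ∀ _ : ℕ, H →L[ℂ] H) j‖ * ‖T j‖ := norm_mul_le _ _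
          _ ≤ ‖S j‖ * ‖(y : ∀ _ : ℕ, H →L[ℂ] H) j‖ * ‖T j‖ :=
              mul_le_mul_of_nonneg_right (norm_mul_le _ _) (norm_nonneg _)
          _ = (‖T j‖ * ‖S j‖) * ‖(y : ∀ _ : ℕ, H →L[ℂ] H) j‖ := by ring
          _ ≤ ‖Φ‖ * ‖y‖ := by
              apply mul_le_mul (hbound j)
                (lp.norm_apply_le_norm ENNReal.top_ne_zero y j) (norm_nonneg _) hK0
      refine ⟨⟨_, hmem⟩, ?_⟩
      apply lp.ext
      funext m
      rw [hΦ]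
      show T m * (S (e.symm (e m)) * (y : ∀ _ : ℕ, H →L[ℂ] H) (e.symm (e m)) *
        T (e.symm (e m))) * S m = _
      rw [e.symm_apply_apply]
      calc T m * (S m * (y : ∀ _ : ℕ, H →L[ℂ] H) m * T m) * S m
          = (T m * S m) * (y : ∀ _ : ℕ, H →L[ℂ] H) m * (T m * S m) := by noncomm_ring
        _ = (y : ∀ _ : ℕ, H →L[ℂ] H) m := by rw [(hTS m).1, one_mul, mul_one]
  · -- multiplicative
    intro x y
    apply lp.ext
    funext m
    have hc := lp.infty_coeFn_mul x y
    have hc2 : ((Φ x * Φ y : lp (fun _ : ℕ => H →L[ℂ] H) ∞) : ∀ _ : ℕ, H →L[ℂ] H) m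
        = (Φ x : ∀ _ : ℕ, H →L[ℂ] H) m * (Φ y : ∀ _ : ℕ, H →L[ℂ] H) m :=
      congrFun (lp.infty_coeFn_mul (Φ x) (Φ y)) m
    rw [hΦ, hc2, hΦ, hΦ, hc, Pi.mul_apply]
    set a := (x : ∀ _ : ℕ, H →L[ℂ] H) (e m)
    set b := (y : ∀ _ : ℕ, H →L[ℂ] H) (e m)
    conv_rhs => rw [show (T m * a * S m) * (T m * b * S m)
        = T m * (a * ((S m * T m) * b)) * S m from by noncomm_ring,
      (hTS m).2, one_mul]
end
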